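/- arXiv:2512.25037 — 6 statements merged into one kernel-verified Lean document; each statement's English description precedes it below -/
import Mathlib

section
/- The 2160 vectors of squared length 4 in the E8 lattice — namely the 16 vectors (±2,0^7) up to coordinate permutation, the 1120 vectors of the form (±1)^4 0^4 up to permutation, and the 1024 vectors with one coordinate ±3/2 and seven coordinates ±1/2 with an odd total number of minus signs — generate the full E8 lattice under integer linear combinations. -/
open scoped BigOperators

/-- Membership in the `E₈` lattice: all coordinates are integers or all are
half-integers, and the coordinate sum is even. -/
def InE8 (x : EuclideanSpace ℝ (Fin 8)) : Prop :=
  ((∀ i, ∃ z : ℤ, x i = z) ∨ (∀ i, ∃ z : ℤ, x i = z + 1/2)) ∧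
  ∃ z : ℤ, ∑ i, x i = 2 * z

/-- The 2160 vectors of squared length 4 in `E₈` (the second layer): the 16 vectors
`(±2, 0⁷)` up to permutation, the 1120 vectors `(±1)⁴0⁴` up to permutation, and the 1024
vectors with one coordinate `±3/2` and seven coordinates `±1/2` with an odd total number
of minus signs (equivalently, with even coordinate sum). -/
def IsE8Layer2Vec (v : EuclideanSpace ℝ (Fin 8)) : Prop :=
  (∃ i, (v i = 2 ∨ v i = -2) ∧ ∀ k, k ≠ i → v k = 0) ∨
  (∃ s : Finset (Fin 8), s.card = 4 ∧ (∀ i ∈ s, v i = 1 ∨ v i = -1) ∧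
    ∀ i ∉ s, v i = 0) ∨
  (∃ i, (v i = 3/2 ∨ v i = -3/2) ∧ (∀ k, k ≠ i → (v k = 1/2 ∨ v k = -1/2)) ∧
    ∃ z : ℤ, ∑ j, v j = 2 * z)

namespace E8Aux

/-- `e_i - e_0` as a vector. -/
noncomputable def dvec (i : Fin 8) : EuclideanSpace ℝ (Fin 8) :=
  WithLp.toLp 2 fun m => (if m = i then (1:ℝ) else 0) - (if m = 0 then 1 else 0)

/-- `(2, 0, …, 0)`. -/
noncomputable def tvec : EuclideanSpace ℝ (Fin 8) := WithLp.toLp 2 fun (m : Fin 8) => if m = 0 then (2:ℝ) else 0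

/-- all entries `1/2`. -/
noncomputable def hvec : EuclideanSpace ℝ (Fin 8) := WithLp.toLp 2 fun (_ : Fin 8) => (1/2 : ℝ)

/-- type-3 helper vector: `3/2` at `k`, `-1/2` at `j`, `1/2` elsewhere. -/
noncomputable def avec (k j : Fin 8) : EuclideanSpace ℝ (Fin 8) :=
  WithLp.toLp 2 fun m => if m = k then (3/2 : ℝ) else if m = j then -(1/2) else (1/2)

lemma sum_ite3 {a b c : ℝ} {k j : Fin 8} (h : k ≠ j) :
    ∑ m : Fin 8, (if m = k then a else if m = j then b else c) = a + b + 6 * c := by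
  have key : ∀ m : Fin 8, (if m = k then a else if m = j then b else c)
      = c + (if m = k then a - c else 0) + (if m = j then b - c else 0) := by
    intro m
    by_cases h1 : m = k
    · subst h1
      simp [h]
    · by_cases h2 : m = j <;> simp [h1, h2, Ne.symm h]
  rw [Finset.sum_congr rfl fun m _ => key m]
  simp [Finset.sum_add_distrib, Finset.sum_ite_eq']
  ring

lemma avec_mem (k j : Fin 8) (h : k ≠ j) :
    avec k j ∈ AddSubgroup.closure {v | IsE8Layer2Vec v} := by
  apply AddSubgroup.subset_closure
  refine Or.inr (Or.inr ⟨k, Or.inl ?_, ?_, ⟨2, ?_⟩⟩)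
  · simp [avec]
  · intro m hm
    by_cases h2 : m = j <;> simp [avec, hm, h2, Ne.symm h] <;> norm_num
  · have := sum_ite3 (a := (3/2:ℝ)) (b := -(1/2)) (c := 1/2) h
    rw [show (∑ m, avec k j m) = _ from this]
    norm_num

lemma tvec_mem : tvec ∈ AddSubgroup.closure {v | IsE8Layer2Vec v} := by
  apply AddSubgroup.subset_closure
  refine Or.inl ⟨0, Or.inl (by simp [tvec]), fun k hk => by simp [tvec, hk]⟩

lemma dvec_mem (i : Fin 8) : dvec i ∈ AddSubgroup.closure {v | IsE8Layer2Vec v} := by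
  by_cases hi : i = 0
  · have : dvec i = 0 := by
      ext m; simp [dvec, hi]
    rw [this]; exact zero_mem _
  · set k : Fin 8 := if i = 1 then 2 else 1 with hk
    have hk0 : k ≠ 0 := by
      rw [hk]; split_ifs <;> decide
    have hki : k ≠ i := by
      rw [hk]; split_ifs with h1
      · rw [h1]; decide
      · exact fun h => h1 h.symm
    have hd : dvec i = avec k 0 - avec k i := by
      ext m
      show dvec i m = avec k 0 m - avec k i m
      by_cases h1 : m = k
      · subst h1
        simp only [dvec, avec, PiLp.toLp_apply, if_neg hki, if_neg hk0, if_pos rfl]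
        ring
      · by_cases h2 : m = 0
        · subst h2
          simp only [dvec, avec, PiLp.toLp_apply, if_neg (Ne.symm hi), if_neg (Ne.symm hk0), if_pos rfl]
          norm_num
        · by_cases h3 : m = i
          · subst h3
            simp only [dvec, avec, PiLp.toLp_apply, if_neg h1, if_neg h2, if_pos rfl]
            norm_num
          · simp only [dvec, avec, PiLp.toLp_apply, if_neg h1, if_neg h2, if_neg h3]
            norm_num
    rw [hd]
    exact sub_mem (avec_mem k 0 hk0) (avec_mem k i hki)

lemma hvec_mem : hvec ∈ AddSubgroup.closure {v | IsE8Layer2Vec v} := by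
  have h1 : (1 : Fin 8) ≠ 0 := by decide
  have hd : hvec = avec 0 1 + dvec 1 := by
    ext m
    show hvec m = avec 0 1 m + dvec 1 m
    by_cases h2 : m = 0
    · simp [hvec, avec, dvec, h2]
      norm_num
    · by_cases h3 : m = 1 <;> simp [hvec, avec, dvec, h2, h3] <;> norm_num
  rw [hd]
  exact add_mem (avec_mem 0 1 (by decide)) (dvec_mem 1)

lemma int_case (x : EuclideanSpace ℝ (Fin 8)) (hint : ∀ i, ∃ z : ℤ, x i = z)
    (hsum : ∃ w : ℤ, ∑ i, x i = 2 * w) :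
    x ∈ AddSubgroup.closure {v | IsE8Layer2Vec v} := by
  choose z hz using hint
  obtain ⟨w, hw⟩ := hsum
  have hzw : (∑ i, z i) = 2 * w := by
    have h1 : ((∑ i, z i : ℤ) : ℝ) = ∑ i, x i := by
      push_cast
      exact Finset.sum_congr rfl fun i _ => (hz i).symm
    exact_mod_cast h1.trans hw
  have hx : x = (∑ i, (z i) • dvec i) + w • tvec := by
    ext m
    have happ : ((∑ i, (z i) • dvec i) + w • tvec) m
        = (∑ i, (z i : ℝ) * dvec i m) + (w : ℝ) * tvec m := by
      show (∑ i, (z i) • dvec i) m + (w • tvec) m = _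
      rw [WithLp.ofLp_sum, Finset.sum_apply]
      congr 1
      · exact Finset.sum_congr rfl fun i _ => by
          show (z i) • (dvec i m) = _
          rw [zsmul_eq_mul]
      · show w • tvec m = _
        rw [zsmul_eq_mul]
    have key : ∑ i, (z i : ℝ) * dvec i m
        = (z m : ℝ) - (if m = 0 then (∑ i, (z i : ℝ)) else 0) := by
      have step : ∀ i, (z i : ℝ) * dvec i m
          = (if m = i then (z i : ℝ) else 0) - (if m = 0 then (z i : ℝ) else 0) := by
        intro i
        simp only [dvec, PiLp.toLp_apply]
        split_ifs <;> ring
      rw [Finset.sum_congr rfl fun i _ => step i, Finset.sum_sub_distrib,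
        Finset.sum_ite_eq Finset.univ m (fun i => (z i : ℝ))]
      congr 1
      · simp
      · split_ifs <;> simp
    rw [happ, hz m, key]
    have hc : (∑ i, (z i : ℝ)) = 2 * (w : ℝ) := by exact_mod_cast hzw
    have ht : tvec m = if m = 0 then (2:ℝ) else 0 := rfl
    rw [ht]
    by_cases hm : m = 0 <;> simp [hm, hc] <;> ring
  rw [hx]
  exact add_mem (AddSubgroup.sum_mem _ fun i _ => AddSubgroup.zsmul_mem _ (dvec_mem i) _)
    (AddSubgroup.zsmul_mem _ tvec_mem _)

/-- `InE8` as an additive subgroup. -/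
noncomputable def E8grp : AddSubgroup (EuclideanSpace ℝ (Fin 8)) where
  carrier := {x | InE8 x}
  zero_mem' := by
    refine ⟨Or.inl fun i => ⟨0, by norm_num [show (0 : EuclideanSpace ℝ (Fin 8)) i = 0 from rfl]⟩,
      0, by norm_num [show ∀ i, (0 : EuclideanSpace ℝ (Fin 8)) i = 0 from fun _ => rfl]⟩
  add_mem' := by
    rintro x y ⟨hx1, a, ha⟩ ⟨hy1, b, hb⟩
    constructor
    · have hxy : ∀ i, (x + y) i = x i + y i := fun i => rfl
      rcases hx1 with hx1 | hx1 <;> rcases hy1 with hy1 | hy1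
      · refine Or.inl fun i => ?_
        obtain ⟨zx, hzx⟩ := hx1 i; obtain ⟨zy, hzy⟩ := hy1 i
        exact ⟨zx + zy, by rw [hxy, hzx, hzy]; push_cast; ring⟩
      · refine Or.inr fun i => ?_
        obtain ⟨zx, hzx⟩ := hx1 i; obtain ⟨zy, hzy⟩ := hy1 i
        exact ⟨zx + zy, by rw [hxy, hzx, hzy]; push_cast; ring⟩
      · refine Or.inr fun i => ?_
        obtain ⟨zx, hzx⟩ := hx1 i; obtain ⟨zy, hzy⟩ := hy1 i
        exact ⟨zx + zy, by rw [hxy, hzx, hzy]; push_cast; ring⟩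
      · refine Or.inl fun i => ?_
        obtain ⟨zx, hzx⟩ := hx1 i; obtain ⟨zy, hzy⟩ := hy1 i
        exact ⟨zx + zy + 1, by rw [hxy, hzx, hzy]; push_cast; ring⟩
    · refine ⟨a + b, ?_⟩
      have : (∑ i, (x + y) i) = ∑ i, (x i + y i) := rfl
      rw [this, Finset.sum_add_distrib, ha, hb]
      push_cast; ring
  neg_mem' := by
    rintro x ⟨hx1, a, ha⟩
    constructor
    · have hxn : ∀ i, (-x) i = -(x i) := fun i => rfl
      rcases hx1 with hx1 | hx1
      · refine Or.inl fun i => ?_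
        obtain ⟨zx, hzx⟩ := hx1 i
        exact ⟨-zx, by rw [hxn, hzx]; push_cast; ring⟩
      · refine Or.inr fun i => ?_
        obtain ⟨zx, hzx⟩ := hx1 i
        exact ⟨-zx - 1, by rw [hxn, hzx]; push_cast; ring⟩
    · refine ⟨-a, ?_⟩
      have : (∑ i, (-x) i) = ∑ i, -(x i) := rfl
      rw [this, Finset.sum_neg_distrib, ha]
      push_cast; ring

lemma gen_in_E8 : {v | IsE8Layer2Vec v} ⊆ (E8grp : Set (EuclideanSpace ℝ (Fin 8))) := by
  rintro v (⟨i, hvi, hvk⟩ | ⟨s, hcard, hs, hns⟩ | ⟨i, hvi, hvk, hz⟩)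
  · constructor
    · refine Or.inl fun k => ?_
      by_cases hk : k = i
      · subst hk
        rcases hvi with h | h
        · exact ⟨2, by rw [h]; norm_num⟩
        · exact ⟨-2, by rw [h]; push_cast; ring⟩
      · exact ⟨0, by rw [hvk k hk]; norm_num⟩
    · have hsum : (∑ j, v j) = v i := by
        apply Finset.sum_eq_single
        · intro b _ hb; exact hvk b hb
        · intro h; exact absurd (Finset.mem_univ i) h
      rcases hvi with h | h
      · exact ⟨1, by rw [hsum, h]; norm_num⟩
      · exact ⟨-1, by rw [hsum, h]; push_cast; ring⟩
  · constructor
    · refine Or.inl fun k => ?_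
      by_cases hk : k ∈ s
      · rcases hs k hk with h | h
        · exact ⟨1, by rw [h]; norm_num⟩
        · exact ⟨-1, by rw [h]; push_cast; ring⟩
      · exact ⟨0, by rw [hns k hk]; norm_num⟩
    · have hsum : (∑ j, v j) = ∑ j ∈ s, v j := by
        symm
        apply Finset.sum_subset (Finset.subset_univ s)
        intro i _ hi; exact hns i hi
      set N := (s.filter fun i => v i = 1).card with hN
      have hsplit : ∑ j ∈ s, v j = (N : ℝ) - ((s.card : ℝ) - N) := by
        rw [← Finset.sum_filter_add_sum_filter_not s (fun i => v i = 1) v]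
        have h1 : ∑ j ∈ s.filter (fun i => v i = 1), v j = (N : ℝ) := by
          rw [hN]
          rw [Finset.sum_congr rfl (fun j hj => (Finset.mem_filter.1 hj).2)]
          simp
        have h2 : ∑ j ∈ s.filter (fun i => ¬ v i = 1), v j
            = -(((s.filter (fun i => ¬ v i = 1)).card : ℝ)) := by
          have step : ∀ j ∈ s.filter (fun i => ¬ v i = 1), v j = -1 := by
            intro j hj
            have hj' := Finset.mem_filter.1 hj
            rcases hs j hj'.1 with h | h
            · exact absurd h hj'.2
            · exact h
          rw [Finset.sum_congr rfl step]
          simp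
        rw [h1, h2]
        have hc : (s.filter (fun i => v i = 1)).card
            + (s.filter (fun i => ¬ v i = 1)).card = s.card :=
          Finset.card_filter_add_card_filter_not _
        have : ((s.filter (fun i => ¬ v i = 1)).card : ℝ) = (s.card : ℝ) - N := by
          rw [hN]
          have := congrArg (fun n : ℕ => (n : ℝ)) hc
          push_cast at this ⊢
          linarith
        rw [this]
        ring
      refine ⟨(N : ℤ) - 2, ?_⟩
      rw [hsum, hsplit, hcard]
      push_cast; ring
  · constructor
    · refine Or.inr fun k => ?_
      by_cases hk : k = i
      · subst hk
        rcases hvi with h | h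
        · exact ⟨1, by rw [h]; norm_num⟩
        · exact ⟨-2, by rw [h]; push_cast; norm_num⟩
      · rcases hvk k hk with h | h
        · exact ⟨0, by rw [h]; norm_num⟩
        · exact ⟨-1, by rw [h]; push_cast; norm_num⟩
    · exact hz

end E8Aux

/-- The second-layer vectors of the `E₈` lattice generate the full lattice as integer
linear combinations. -/
theorem e8_second_layer_generates :
    (AddSubgroup.closure {v | IsE8Layer2Vec v} : Set (EuclideanSpace ℝ (Fin 8))) =
      {x | InE8 x} := by
  have hmain : AddSubgroup.closure {v | IsE8Layer2Vec v} = E8Aux.E8grp := by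
    apply le_antisymm
    · exact (AddSubgroup.closure_le _).2 E8Aux.gen_in_E8
    · intro x hx
      obtain ⟨hx1, w, hw⟩ := hx
      rcases hx1 with hx1 | hx1
      · exact E8Aux.int_case x hx1 ⟨w, hw⟩
      · have hxh : x - E8Aux.hvec ∈ AddSubgroup.closure {v | IsE8Layer2Vec v} := by
          apply E8Aux.int_case
          · intro i
            obtain ⟨z, hz⟩ := hx1 i
            refine ⟨z, ?_⟩
            show x i - E8Aux.hvec i = z
            rw [hz]
            simp [E8Aux.hvec]
          · refine ⟨w - 2, ?_⟩
            have : (∑ i, (x - E8Aux.hvec) i) = ∑ i, (x i - (1/2 : ℝ)) := rfl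
            rw [this, Finset.sum_sub_distrib, hw]
            simp
            push_cast; ring
        have : x = (x - E8Aux.hvec) + E8Aux.hvec := by abel
        rw [this]
        exact add_mem hxh E8Aux.hvec_mem
  rw [hmain]
  rfl
end

section
/- In the extended binary Golay code 𝒢 of length 24, the 352 octads (weight-8 codewords) whose first two coordinates are (1,0) or (0,1) generate 𝒢 as an 𝔽₂-vector space. -/
open scoped BigOperators

/-- The Hamming weight of a binary word of length 24. -/
def wt (c : Fin 24 → ZMod 2) : ℕ := (Finset.univ.filter fun i => c i = 1).card

namespace GolayAux
open Finset

abbrev V24 := Fin 24 → ZMod 2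

noncomputable def dot (x y : V24) : ZMod 2 := ∑ i, x i * y i

def sgn (a : ZMod 2) : ℤ := if a = 0 then 1 else -1

def eu (i : Fin 24) : V24 := Pi.single i 1

def allOnes : V24 := fun _ => 1

lemma zmod2_cases (a : ZMod 2) : a = 0 ∨ a = 1 := by revert a; decide

lemma zmod2_ne_zero {a : ZMod 2} (h : a ≠ 0) : a = 1 := by revert h; revert a; decide

lemma sgn_add (a b : ZMod 2) : sgn (a + b) = sgn a * sgn b := by revert a b; decide

lemma v24_add_self (x : V24) : x + x = 0 := by
  ext i; exact CharTwo.add_self_eq_zero _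

lemma dot_add_left (x y z : V24) : dot (x + y) z = dot x z + dot y z := by
  simp [dot, add_mul, Finset.sum_add_distrib]

lemma dot_add_right (x y z : V24) : dot x (y + z) = dot x y + dot x z := by
  simp [dot, mul_add, Finset.sum_add_distrib]

lemma dot_zero_right (x : V24) : dot x 0 = 0 := by simp [dot]

lemma dot_comm (x y : V24) : dot x y = dot y x := by
  simp [dot, mul_comm]

lemma dot_eu (c : V24) (i : Fin 24) : dot c (eu i) = c i := by
  rw [dot]
  rw [Finset.sum_eq_single_of_mem i (Finset.mem_univ i)]
  · simp [eu]
  · intro j _ hj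
    simp [eu, Pi.single_eq_of_ne hj]

lemma dot_allOnes (c : V24) : dot c allOnes = (wt c : ZMod 2) := by
  rw [dot, wt]
  have : ∀ i : Fin 24, c i * allOnes i = if c i = 1 then (1 : ZMod 2) else 0 := by
    intro i
    rcases zmod2_cases (c i) with h | h <;> simp [h, allOnes]
  rw [Finset.sum_congr rfl (fun i _ => this i), Finset.sum_boole]

lemma sum_sgn_coords (c : V24) : ∑ i, sgn (c i) = 24 - 2 * (wt c : ℤ) := by
  have : ∀ i : Fin 24, sgn (c i) = 1 - 2 * (if c i = 1 then (1:ℤ) else 0) := by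
    intro i
    rcases zmod2_cases (c i) with h | h <;> simp [h, sgn]
  rw [Finset.sum_congr rfl (fun i _ => this i)]
  rw [Finset.sum_sub_distrib, ← Finset.mul_sum, Finset.sum_boole]
  simp [wt]

lemma sum_add_reindex (F : Finset V24) (v : V24) (hcl : ∀ c ∈ F, c + v ∈ F)
    (f : V24 → ℤ) : ∑ c ∈ F, f (c + v) = ∑ c ∈ F, f c := by
  apply Finset.sum_nbij' (fun c => c + v) (fun c => c + v)
  · intro a ha; exact hcl a ha
  · intro a ha; exact hcl a ha
  · intro a _; rw [add_assoc, v24_add_self, add_zero]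
  · intro a _; rw [add_assoc, v24_add_self, add_zero]
  · intro a _; rfl

lemma card_add_bij (s t : Finset V24) (v : V24) (h : ∀ c, c ∈ s ↔ c + v ∈ t) :
    s.card = t.card := by
  apply Finset.card_nbij' (fun c => c + v) (fun c => c + v)
  · intro a ha; exact (h a).1 ha
  · intro a ha
    show a + v ∈ s
    rw [h]
    rwa [add_assoc, v24_add_self, add_zero]
  · intro a _; show a + v + v = a; rw [add_assoc, v24_add_self, add_zero]
  · intro a _; show a + v + v = a; rw [add_assoc, v24_add_self, add_zero]

lemma char_sum_zero (F : Finset V24) (y c0 : V24) (hcl : ∀ c ∈ F, c + c0 ∈ F)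
    (hd : dot c0 y = 1) : ∑ c ∈ F, sgn (dot c y) = 0 := by
  have h1 : ∑ c ∈ F, sgn (dot (c + c0) y) = ∑ c ∈ F, sgn (dot c y) :=
    sum_add_reindex F c0 hcl (fun c => sgn (dot c y))
  have h2 : ∀ c ∈ F, sgn (dot (c + c0) y) = - sgn (dot c y) := by
    intro c _
    rw [dot_add_left, sgn_add, hd]
    have : sgn 1 = -1 := by decide
    rw [this]; ring
  rw [Finset.sum_congr rfl h2, Finset.sum_neg_distrib] at h1
  omega

lemma char_sum_card (F : Finset V24) (y : V24) (h : ∀ c ∈ F, dot c y = 0) :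
    ∑ c ∈ F, sgn (dot c y) = F.card := by
  rw [Finset.sum_congr rfl (fun c hc => by rw [h c hc])]
  simp [show sgn 0 = 1 from rfl]

/-- The dichotomy for character sums over an addition-closed finset. -/
lemma char_sum (F : Finset V24) (y : V24)
    (hadd : ∀ a ∈ F, ∀ b ∈ F, a + b ∈ F) :
    ∑ c ∈ F, sgn (dot c y) =
      (if ∀ c ∈ F, dot c y = 0 then (F.card : ℤ) else 0) := by
  classical
  by_cases h : ∀ c ∈ F, dot c y = 0
  · rw [if_pos h]; exact char_sum_card F y h
  · rw [if_neg h]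
    push_neg at h
    obtain ⟨c0, hc0F, hc0⟩ := h
    exact char_sum_zero F y c0 (fun c hc => hadd c hc c0 hc0F) (zmod2_ne_zero hc0)


section MomentIdentities
variable (F : Finset V24)

open Classical in
/-- number of coordinates `i` with `e_i` orthogonal to `F` -/
noncomputable def p1 (F : Finset V24) : ℕ :=
  (univ.filter fun i : Fin 24 => ∀ c ∈ F, dot c (eu i) = 0).card

open Classical in
/-- number of ordered pairs `(i,j)`, `i ≠ j`, with `e_i + e_j` orthogonal to `F` -/
noncomputable def p2 (F : Finset V24) : ℕ :=
  (univ.filter fun p : Fin 24 × Fin 24 =>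
    p.1 ≠ p.2 ∧ ∀ c ∈ F, dot c (eu p.1 + eu p.2) = 0).card

open Classical in
lemma moment1 (hadd : ∀ a ∈ F, ∀ b ∈ F, a + b ∈ F) : ∑ c ∈ F, (24 - 2 * (wt c : ℤ)) = F.card * p1 F := by
  have step1 : ∑ c ∈ F, (24 - 2 * (wt c : ℤ)) =
      ∑ c ∈ F, ∑ i, sgn (dot c (eu i)) := by
    apply Finset.sum_congr rfl
    intro c _
    simp only [dot_eu]
    exact (sum_sgn_coords c).symm
  rw [step1, Finset.sum_comm]
  have step2 : ∀ i : Fin 24, ∑ c ∈ F, sgn (dot c (eu i)) =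
      (if ∀ c ∈ F, dot c (eu i) = 0 then (F.card : ℤ) else 0) :=
    fun i => char_sum F (eu i) hadd
  rw [Finset.sum_congr rfl (fun i _ => step2 i)]
  rw [Finset.sum_ite, Finset.sum_const, Finset.sum_const]
  simp [p1, mul_comm]

open Classical in
lemma card_diag24 :
    (univ.filter fun p : Fin 24 × Fin 24 => p.1 = p.2).card = 24 := by
  have h : (univ : Finset (Fin 24)).card =
      (univ.filter fun p : Fin 24 × Fin 24 => p.1 = p.2).card := by
    apply Finset.card_nbij (fun i => (i, i))
    · intro a _; simp
    · intro a _ b _ hab; exact congrArg Prod.fst hab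
    · intro p hp
      simp only [Finset.coe_filter, Set.mem_setOf_eq] at hp
      exact ⟨p.1, by simp, Prod.ext rfl hp.2⟩
  rw [← h]; simp

open Classical in
lemma moment2 (hadd : ∀ a ∈ F, ∀ b ∈ F, a + b ∈ F) :
    ∑ c ∈ F, (24 - 2 * (wt c : ℤ))^2 = (F.card : ℤ) * (24 + (p2 F : ℤ)) := by
  set Q : Fin 24 × Fin 24 → Prop := fun p => ∀ c ∈ F, dot c (eu p.1 + eu p.2) = 0 with hQ
  have step1 : ∀ c ∈ F, (24 - 2 * (wt c : ℤ))^2 =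
      ∑ p : Fin 24 × Fin 24, sgn (dot c (eu p.1 + eu p.2)) := by
    intro c _
    have : ∀ p : Fin 24 × Fin 24, sgn (dot c (eu p.1 + eu p.2)) =
        sgn (c p.1) * sgn (c p.2) := by
      intro p
      rw [dot_add_right, dot_eu, dot_eu, sgn_add]
    rw [Finset.sum_congr rfl (fun p _ => this p), Fintype.sum_prod_type]
    have h2 : ∑ x : Fin 24, ∑ y : Fin 24, sgn (c x) * sgn (c y) =
        (24 - 2 * (wt c : ℤ))^2 := by
      rw [← Finset.sum_mul_sum, sum_sgn_coords]
      ring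
    exact h2.symm
  rw [Finset.sum_congr rfl step1, Finset.sum_comm]
  have step2 : ∀ p : Fin 24 × Fin 24, ∑ c ∈ F, sgn (dot c (eu p.1 + eu p.2)) =
      (if Q p then (F.card : ℤ) else 0) :=
    fun p => char_sum F _ hadd
  rw [Finset.sum_congr rfl (fun p _ => step2 p), Finset.sum_ite, Finset.sum_const,
    Finset.sum_const]
  have hdiag : ∀ p : Fin 24 × Fin 24, p.1 = p.2 → Q p := by
    intro p hp c _
    rw [hp, v24_add_self, dot_zero_right]
  have hsplit : univ.filter Q =
      (univ.filter fun p : Fin 24 × Fin 24 => p.1 = p.2) ∪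
      (univ.filter fun p : Fin 24 × Fin 24 => p.1 ≠ p.2 ∧ Q p) := by
    ext p
    simp only [Finset.mem_filter, Finset.mem_union, Finset.mem_univ, true_and]
    constructor
    · intro h
      by_cases hp : p.1 = p.2
      · exact Or.inl hp
      · exact Or.inr ⟨hp, h⟩
    · rintro (hp | ⟨_, h⟩)
      · exact hdiag p hp
      · exact h
  have hdisj : Disjoint
      (univ.filter fun p : Fin 24 × Fin 24 => p.1 = p.2)
      (univ.filter fun p : Fin 24 × Fin 24 => p.1 ≠ p.2 ∧ Q p) := by
    rw [Finset.disjoint_filter]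
    tauto
  rw [hsplit, Finset.card_union_of_disjoint hdisj, card_diag24]
  have : p2 F = (univ.filter fun p : Fin 24 × Fin 24 => p.1 ≠ p.2 ∧ Q p).card := rfl
  rw [this]
  ring

end MomentIdentities

lemma wt_eq_zero_iff (c : V24) : wt c = 0 ↔ c = 0 := by
  rw [wt, Finset.card_eq_zero, Finset.filter_eq_empty_iff]
  constructor
  · intro h
    ext i
    rcases zmod2_cases (c i) with h' | h'
    · simp [h']
    · exact absurd h' (h (Finset.mem_univ i))
  · intro h i _
    simp [h]

lemma wt_allOnes : wt allOnes = 24 := by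
  rw [wt]
  simp [allOnes]

lemma wt_eq_24_iff (c : V24) : wt c = 24 ↔ c = allOnes := by
  constructor
  · intro h
    have : (Finset.univ.filter fun i => c i = 1) = Finset.univ := by
      apply Finset.eq_univ_of_card
      rw [← wt, h]; simp
    ext i
    have := Finset.mem_filter.mp (this ▸ Finset.mem_univ i)
    simp [this.2, allOnes]
  · intro h; rw [h]; exact wt_allOnes

/-- number of codewords of weight `w` in `F` -/
def nw (F : Finset V24) (w : ℕ) : ℕ := (F.filter fun c => wt c = w).card

/-- indicator of weight `w` -/
def indw (w : ℕ) (c : V24) : ℤ := if wt c = w then 1 else 0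

lemma sum_indw (F : Finset V24) (w : ℕ) : ∑ c ∈ F, indw w c = (nw F w : ℤ) := by
  simp [indw, nw, Finset.sum_boole]

section WeightDecomp
variable (F : Finset V24)
  (hw : ∀ c ∈ F, wt c = 0 ∨ wt c = 8 ∨ wt c = 12 ∨ wt c = 16 ∨ wt c = 24)

include hw in
lemma card_decomp : (F.card : ℤ) =
    (nw F 0 : ℤ) + nw F 8 + nw F 12 + nw F 16 + nw F 24 := by
  have point : ∀ c ∈ F, (1 : ℤ) =
      indw 0 c + indw 8 c + indw 12 c + indw 16 c + indw 24 c := by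
    intro c hc
    rcases hw c hc with h | h | h | h | h <;> simp [indw, h]
  have h0 : (F.card : ℤ) = ∑ c ∈ F, (1 : ℤ) := by simp
  rw [h0, Finset.sum_congr rfl point]
  rw [Finset.sum_add_distrib, Finset.sum_add_distrib, Finset.sum_add_distrib,
    Finset.sum_add_distrib, sum_indw, sum_indw, sum_indw, sum_indw, sum_indw]

include hw in
lemma sum1_decomp : ∑ c ∈ F, (24 - 2 * (wt c : ℤ)) =
    24 * (nw F 0 : ℤ) + 8 * nw F 8 - 8 * nw F 16 - 24 * nw F 24 := by
  have point : ∀ c ∈ F, (24 - 2 * (wt c : ℤ)) =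
      24 * indw 0 c + 8 * indw 8 c - 8 * indw 16 c - 24 * indw 24 c := by
    intro c hc
    rcases hw c hc with h | h | h | h | h <;> simp [indw, h]
  rw [Finset.sum_congr rfl point]
  rw [Finset.sum_sub_distrib, Finset.sum_sub_distrib, Finset.sum_add_distrib,
    ← Finset.mul_sum, ← Finset.mul_sum, ← Finset.mul_sum, ← Finset.mul_sum,
    sum_indw, sum_indw, sum_indw, sum_indw]

include hw in
lemma sum2_decomp : ∑ c ∈ F, (24 - 2 * (wt c : ℤ))^2 =
    576 * (nw F 0 : ℤ) + 64 * nw F 8 + 64 * nw F 16 + 576 * nw F 24 := by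
  have point : ∀ c ∈ F, (24 - 2 * (wt c : ℤ))^2 =
      576 * indw 0 c + 64 * indw 8 c + 64 * indw 16 c + 576 * indw 24 c := by
    intro c hc
    rcases hw c hc with h | h | h | h | h <;> simp [indw, h]
  rw [Finset.sum_congr rfl point]
  rw [Finset.sum_add_distrib, Finset.sum_add_distrib, Finset.sum_add_distrib,
    ← Finset.mul_sum, ← Finset.mul_sum, ← Finset.mul_sum, ← Finset.mul_sum,
    sum_indw, sum_indw, sum_indw, sum_indw]

end WeightDecomp

lemma nw_zero (F : Finset V24) (h0 : 0 ∈ F) : nw F 0 = 1 := by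
  rw [nw]
  rw [show F.filter (fun c => wt c = 0) = {0} by
    ext c
    simp only [Finset.mem_filter, Finset.mem_singleton, wt_eq_zero_iff]
    constructor
    · exact fun h => h.2
    · rintro rfl; exact ⟨h0, rfl⟩]
  simp

lemma nw_24_mem (F : Finset V24) (h1 : allOnes ∈ F) : nw F 24 = 1 := by
  rw [nw]
  rw [show F.filter (fun c => wt c = 24) = {allOnes} by
    ext c
    simp only [Finset.mem_filter, Finset.mem_singleton, wt_eq_24_iff]
    constructor
    · exact fun h => h.2
    · rintro rfl; exact ⟨h1, rfl⟩]
  simp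

lemma nw_24_not_mem (F : Finset V24) (h1 : allOnes ∉ F) : nw F 24 = 0 := by
  rw [nw, Finset.card_eq_zero, Finset.filter_eq_empty_iff]
  intro c hc h
  exact h1 ((wt_eq_24_iff c).mp h ▸ hc)


section Code

variable (G : Submodule (ZMod 2) V24)

open Classical in
/-- The code as a finset. -/
noncomputable def Gf : Finset V24 := Finset.univ.filter (· ∈ G)

open Classical in
lemma mem_Gf (c : V24) : c ∈ Gf G ↔ c ∈ G := by simp [Gf]

/-- the standard bilinear form -/
noncomputable def B : LinearMap.BilinForm (ZMod 2) V24 :=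
  LinearMap.mk₂ (ZMod 2) dot
    (fun x y z => dot_add_left x y z)
    (fun a x y => by simp [dot, Finset.mul_sum, mul_assoc])
    (fun x y z => dot_add_right x y z)
    (fun a x y => by
      simp only [dot, smul_eq_mul, Pi.smul_apply, Finset.mul_sum]
      exact Finset.sum_congr rfl fun i _ => by ring)

lemma B_apply (x y : V24) : B x y = dot x y := rfl

lemma B_symm : ∀ x y : V24, B x y = B y x := fun x y => dot_comm x y

lemma B_nondeg : (B).Nondegenerate := by
  have hl : LinearMap.SeparatingLeft B := by
    intro x hx
    ext i
    have := hx (eu i)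
    rw [B_apply, dot_eu] at this
    simp [this]
  exact ⟨hl, fun y hy => hl y (fun x => (B_symm y x).trans (hy x))⟩

lemma B_refl : (B).IsRefl := by
  intro x y h
  rwa [B_symm]

variable (hdim : Module.finrank (ZMod 2) G = 12)
  (hselfdual : ∀ c ∈ G, ∀ d ∈ G, ∑ i, c i * d i = 0)
  (hwt : ∀ c ∈ G, wt c ∈ ({0, 8, 12, 16, 24} : Set ℕ))

include hselfdual in
lemma dot_mem (c d : V24) (hc : c ∈ G) (hd : d ∈ G) : dot c d = 0 :=
  hselfdual c hc d hd

include hdim hselfdual in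
lemma mem_orth (x : V24) (hx : ∀ c ∈ G, dot c x = 0) : x ∈ G := by
  have hfin : Module.finrank (ZMod 2) V24 = 24 := by
    simp [Module.finrank_pi]
  have hle : G ≤ (B).orthogonal G := by
    intro y hy
    rw [LinearMap.BilinForm.mem_orthogonal_iff]
    intro n hn
    exact hselfdual n hn y hy
  have horth : Module.finrank (ZMod 2) ((B).orthogonal G) = 12 := by
    rw [LinearMap.BilinForm.finrank_orthogonal B_nondeg G, hfin, hdim]
  have : G = (B).orthogonal G := by
    apply Submodule.eq_of_le_of_finrank_le hle
    rw [horth, hdim]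
  rw [this, LinearMap.BilinForm.mem_orthogonal_iff]
  intro n hn
  exact hx n hn

include hwt in
lemma wt_five (c : V24) (hc : c ∈ G) :
    wt c = 0 ∨ wt c = 8 ∨ wt c = 12 ∨ wt c = 16 ∨ wt c = 24 := by
  have := hwt c hc
  simpa using this

include hwt in
lemma small_wt_eq_zero (x : V24) (hx : x ∈ G) (h : wt x ≤ 4) : x = 0 := by
  rcases wt_five G hwt x hx with h' | h' | h' | h' | h' <;> first
    | exact (wt_eq_zero_iff x).mp h'
    | omega

include hdim hselfdual hwt in
lemma allOnes_mem : allOnes ∈ G := by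
  apply mem_orth G hdim hselfdual
  intro c hc
  rw [dot_allOnes]
  rcases wt_five G hwt c hc with h | h | h | h | h <;> rw [h] <;> decide

include hdim in
lemma cardGf : (Gf G).card = 4096 := by
  classical
  have h1 : (Gf G).card = Fintype.card G := by
    rw [Gf, Fintype.card_subtype]
  have h2 : Fintype.card G = 2 ^ Module.finrank (ZMod 2) G := by
    have := Module.card_eq_pow_finrank (K := ZMod 2) (V := G)
    simpa using this
  rw [h1, h2, hdim]
  norm_num

lemma Gf_add : ∀ a ∈ Gf G, ∀ b ∈ Gf G, a + b ∈ Gf G := by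
  intro a ha b hb
  rw [mem_Gf] at *
  exact G.add_mem ha hb

lemma Gf_zero : (0 : V24) ∈ Gf G := by rw [mem_Gf]; exact G.zero_mem

lemma dot_smul_left (a : ZMod 2) (x y : V24) : dot (a • x) y = a * dot x y := by
  simp only [dot, Pi.smul_apply, smul_eq_mul, Finset.mul_sum]
  exact Finset.sum_congr rfl fun i _ => by ring

lemma wt_add_allOnes (c : V24) : wt c + wt (c + allOnes) = 24 := by
  rw [wt, wt]
  have key : ∀ i : Fin 24, ((c + allOnes) i = 1) ↔ ¬ (c i = 1) := by
    intro i
    rcases zmod2_cases (c i) with h | h <;> simp [h, allOnes]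
  rw [show (Finset.univ.filter fun i => (c + allOnes) i = 1)
      = Finset.univ.filter (fun i => ¬ (c i = 1)) from
    Finset.filter_congr (fun i _ => by rw [key i])]
  rw [Finset.card_filter_add_card_filter_not]
  simp

lemma wt_le_support (x : V24) (s : Finset (Fin 24)) (h : ∀ m, x m = 1 → m ∈ s) :
    wt x ≤ s.card := by
  apply Finset.card_le_card
  intro m hm
  exact h m (Finset.mem_filter.mp hm).2

lemma eu_add_eu_apply (i j m : Fin 24) : (eu i + eu j) m = (if m = i then 1 else 0) + (if m = j then 1 else 0) := by
  have key : ∀ a : Fin 24, (Pi.single a 1 : V24) m = if m = a then 1 else 0 := by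
    intro a
    by_cases h : m = a
    · subst h; simp
    · rw [if_neg h]; exact Pi.single_eq_of_ne h 1
  rw [Pi.add_apply, eu, eu, key i, key j]

include hwt in
lemma eu_not_mem (i : Fin 24) : eu i ∉ G := by
  intro h
  have h4 : wt (eu i) ≤ 4 := by
    apply le_trans (wt_le_support _ {i} ?_)
    · simp
    · intro m hm
      by_contra hmi
      simp only [Finset.mem_singleton] at hmi
      rw [eu, Pi.single_eq_of_ne hmi] at hm
      exact one_ne_zero hm.symm
  have := small_wt_eq_zero G hwt _ h h4
  have := congrFun this i
  rw [eu, Pi.single_eq_same] at this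
  exact one_ne_zero this

include hwt in
lemma eu_pair_not_mem (i j : Fin 24) (hij : i ≠ j) : eu i + eu j ∉ G := by
  intro h
  have h4 : wt (eu i + eu j) ≤ 4 := by
    apply le_trans (wt_le_support _ {i, j} ?_)
    · apply le_trans (Finset.card_insert_le _ _); simp
    · intro m hm
      rw [eu_add_eu_apply] at hm
      by_contra hm'
      simp only [Finset.mem_insert, Finset.mem_singleton, not_or] at hm'
      rw [if_neg hm'.1, if_neg hm'.2] at hm
      exact one_ne_zero hm.symm
  have hz := small_wt_eq_zero G hwt _ h h4
  have := congrFun hz i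
  rw [eu_add_eu_apply, if_pos rfl, if_neg hij] at this
  simp at this

include hwt in
lemma pair_eq (i j k l : Fin 24) (hij : i ≠ j) (hkl : k ≠ l)
    (hmem : (eu i + eu j) + (eu k + eu l) ∈ G) :
    (k = i ∧ l = j) ∨ (k = j ∧ l = i) := by
  have h4 : wt ((eu i + eu j) + (eu k + eu l)) ≤ 4 := by
    apply le_trans (wt_le_support _ {i, j, k, l} ?_)
    · apply le_trans (Finset.card_insert_le _ _)
      apply Nat.succ_le_succ
      apply le_trans (Finset.card_insert_le _ _)
      apply Nat.succ_le_succ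
      apply le_trans (Finset.card_insert_le _ _)
      simp
    · intro m hm
      by_contra hm'
      simp only [Finset.mem_insert, Finset.mem_singleton, not_or] at hm'
      obtain ⟨h1, h2, h3, h4⟩ := hm'
      rw [Pi.add_apply, eu_add_eu_apply, eu_add_eu_apply,
        if_neg h1, if_neg h2, if_neg h3, if_neg h4] at hm
      exact one_ne_zero hm.symm
  have hz := small_wt_eq_zero G hwt _ hmem h4
  have heq : ∀ m, (eu i + eu j) m = (eu k + eu l) m := by
    intro m
    have h0 := congrFun hz m
    rw [Pi.add_apply] at h0
    have := congrArg (fun t => t + (eu k + eu l) m) h0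
    simpa [add_assoc, CharTwo.add_self_eq_zero] using this
  have hk : k = i ∨ k = j := by
    by_contra hc
    push_neg at hc
    have h0 := heq k
    rw [eu_add_eu_apply, eu_add_eu_apply, if_neg hc.1, if_neg hc.2,
      if_pos rfl, if_neg hkl] at h0
    simp at h0
  have hl : l = i ∨ l = j := by
    by_contra hc
    push_neg at hc
    have h0 := heq l
    rw [eu_add_eu_apply, eu_add_eu_apply, if_neg hc.1, if_neg hc.2,
      if_neg (Ne.symm hkl), if_pos rfl] at h0
    simp at h0
  rcases hk with rfl | rfl <;> rcases hl with rfl | rfl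
  · exact absurd rfl hkl
  · exact Or.inl ⟨rfl, rfl⟩
  · exact Or.inr ⟨rfl, rfl⟩
  · exact absurd rfl hkl


section Hyperplane

variable (Phi : V24 →ₗ[ZMod 2] ZMod 2)

/-- the intersection of the code with the kernel of a functional, as a finset -/
noncomputable def Hf : Finset V24 := (Gf G).filter (fun c => Phi c = 0)

lemma mem_Hf (c : V24) : c ∈ Hf G Phi ↔ c ∈ G ∧ Phi c = 0 := by
  simp [Hf, mem_Gf]

lemma Hf_add : ∀ a ∈ Hf G Phi, ∀ b ∈ Hf G Phi, a + b ∈ Hf G Phi := by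
  intro a ha b hb
  rw [mem_Hf] at *
  exact ⟨G.add_mem ha.1 hb.1, by rw [map_add, ha.2, hb.2, add_zero]⟩

lemma Hf_zero : (0 : V24) ∈ Hf G Phi := by
  rw [mem_Hf]; exact ⟨G.zero_mem, map_zero Phi⟩

include hdim in
lemma cardHf (hPhi : ∃ c0 ∈ G, Phi c0 = 1) : (Hf G Phi).card = 2048 := by
  classical
  obtain ⟨c0, hc0G, hc0Phi⟩ := hPhi
  have key : ((Gf G).filter (fun c => Phi c = 0)).card
      = ((Gf G).filter (fun c => ¬ Phi c = 0)).card := by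
    apply card_add_bij _ _ c0
    intro c
    simp only [Finset.mem_filter, mem_Gf]
    constructor
    · rintro ⟨hcG, hc⟩
      refine ⟨G.add_mem hcG hc0G, ?_⟩
      rw [map_add, hc, hc0Phi, zero_add]
      exact one_ne_zero
    · rintro ⟨hcG, hc⟩
      have hcG' : c ∈ G := by
        have := G.add_mem hcG hc0G
        rwa [add_assoc, v24_add_self, add_zero] at this
      refine ⟨hcG', ?_⟩
      have h2 : Phi c + Phi c0 = 1 := by rw [← map_add]; exact zmod2_ne_zero hc
      rw [hc0Phi] at h2
      rcases zmod2_cases (Phi c) with h | h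
      · exact h
      · rw [h] at h2; exact absurd h2 (by decide)
  have hsum := Finset.card_filter_add_card_filter_not
    (s := Gf G) (p := fun c => Phi c = 0)
  rw [cardGf G hdim] at hsum
  rw [Hf]
  omega

include hdim hselfdual in
lemma hyperplane_functional (y : V24) (hy : ∀ c ∈ Hf G Phi, dot c y = 0)
    (hPhi : ∃ c0 ∈ G, Phi c0 = 1) :
    y ∈ G ∨ ∀ c ∈ G, dot c y = Phi c := by
  obtain ⟨c0, hc0G, hc0Phi⟩ := hPhi
  have key : ∀ c ∈ G, dot c y = Phi c * dot c0 y := by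
    intro c hc
    have hH : c + Phi c • c0 ∈ Hf G Phi := by
      rw [mem_Hf]
      refine ⟨G.add_mem hc (G.smul_mem _ hc0G), ?_⟩
      rw [map_add, map_smul, hc0Phi, smul_eq_mul, mul_one]
      exact CharTwo.add_self_eq_zero _
    have h0 := hy _ hH
    rw [dot_add_left, dot_smul_left] at h0
    have := congrArg (fun t => t + Phi c * dot c0 y) h0
    simpa [add_assoc, CharTwo.add_self_eq_zero] using this
  by_cases h0 : dot c0 y = 0
  · left
    apply mem_orth G hdim hselfdual
    intro c hc
    rw [key c hc, h0, mul_zero]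
  · right
    intro c hc
    rw [key c hc, zmod2_ne_zero h0, mul_one]

include hdim hselfdual hwt in
lemma pair_functional (i j : Fin 24) (hij : i ≠ j)
    (hp : ∀ c ∈ Hf G Phi, dot c (eu i + eu j) = 0)
    (hPhi : ∃ c0 ∈ G, Phi c0 = 1) :
    ∀ c ∈ G, dot c (eu i + eu j) = Phi c := by
  rcases hyperplane_functional G hdim hselfdual Phi (eu i + eu j) hp hPhi with h | h
  · exact absurd h (eu_pair_not_mem G hwt i j hij)
  · exact h

include hdim hselfdual hwt in
lemma p1_Hf_le (hPhi : ∃ c0 ∈ G, Phi c0 = 1) : p1 (Hf G Phi) ≤ 1 := by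
  classical
  rw [p1]
  apply Finset.card_le_one.mpr
  intro i hi j hj
  simp only [Finset.mem_filter, Finset.mem_univ, true_and] at hi hj
  by_contra hij
  have fi : ∀ c ∈ G, dot c (eu i) = Phi c := by
    rcases hyperplane_functional G hdim hselfdual Phi (eu i) hi hPhi with h | h
    · exact absurd h (eu_not_mem G hwt i)
    · exact h
  have fj : ∀ c ∈ G, dot c (eu j) = Phi c := by
    rcases hyperplane_functional G hdim hselfdual Phi (eu j) hj hPhi with h | h
    · exact absurd h (eu_not_mem G hwt j)
    · exact h
  have : eu i + eu j ∈ G := by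
    apply mem_orth G hdim hselfdual
    intro c hc
    rw [dot_add_right, fi c hc, fj c hc]
    exact CharTwo.add_self_eq_zero _
  exact eu_pair_not_mem G hwt i j hij this

include hdim hselfdual hwt in
lemma p2_Hf_pair_unique (hPhi : ∃ c0 ∈ G, Phi c0 = 1)
    (i j k l : Fin 24) (hij : i ≠ j) (hkl : k ≠ l)
    (h1 : ∀ c ∈ Hf G Phi, dot c (eu i + eu j) = 0)
    (h2 : ∀ c ∈ Hf G Phi, dot c (eu k + eu l) = 0) :
    (k = i ∧ l = j) ∨ (k = j ∧ l = i) := by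
  have f1 := pair_functional G hdim hselfdual hwt Phi i j hij h1 hPhi
  have f2 := pair_functional G hdim hselfdual hwt Phi k l hkl h2 hPhi
  have : (eu i + eu j) + (eu k + eu l) ∈ G := by
    apply mem_orth G hdim hselfdual
    intro c hc
    rw [dot_add_right, f1 c hc, f2 c hc]
    exact CharTwo.add_self_eq_zero _
  exact pair_eq G hwt i j k l hij hkl this

include hdim hselfdual hwt in
lemma p2_Hf_cases (hPhi : ∃ c0 ∈ G, Phi c0 = 1) :
    p2 (Hf G Phi) = 0 ∨ p2 (Hf G Phi) = 2 := by
  classical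
  rw [p2]
  set P := (Finset.univ.filter fun p : Fin 24 × Fin 24 =>
    p.1 ≠ p.2 ∧ ∀ c ∈ Hf G Phi, dot c (eu p.1 + eu p.2) = 0) with hP
  rcases Finset.eq_empty_or_nonempty P with h | ⟨⟨i, j⟩, hij⟩
  · left; rw [h]; simp
  · right
    have hij' := hij
    rw [hP, Finset.mem_filter] at hij'
    obtain ⟨-, hne, hperp⟩ := hij'
    have hswap : (j, i) ∈ P := by
      rw [hP, Finset.mem_filter]
      refine ⟨Finset.mem_univ _, Ne.symm hne, ?_⟩
      intro c hc
      rw [add_comm]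
      exact hperp c hc
    have hPeq : P = {(i, j), (j, i)} := by
      ext ⟨k, l⟩
      constructor
      · intro hkl
        rw [hP, Finset.mem_filter] at hkl
        obtain ⟨-, hkl1, hkl2⟩ := hkl
        rcases p2_Hf_pair_unique G hdim hselfdual hwt Phi hPhi i j k l hne hkl1
          hperp hkl2 with ⟨rfl, rfl⟩ | ⟨rfl, rfl⟩
        · simp
        · simp
      · intro hkl
        simp only [Finset.mem_insert, Finset.mem_singleton] at hkl
        rcases hkl with h | h
        · rw [h]; exact hij
        · rw [h]; exact hswap
    rw [hPeq]
    rw [Finset.card_insert_of_notMem (by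
      simp only [Finset.mem_singleton, Prod.mk.injEq, not_and]
      intro h
      exact absurd h hne)]
    simp

include hdim hselfdual hwt in
lemma p2_Gf_zero : p2 (Gf G) = 0 := by
  classical
  rw [p2, Finset.card_eq_zero, Finset.filter_eq_empty_iff]
  rintro ⟨i, j⟩ -
  rintro ⟨hij, hperp⟩
  have : eu i + eu j ∈ G := by
    apply mem_orth G hdim hselfdual
    intro c hc
    exact hperp c ((mem_Gf G c).mpr hc)
  exact eu_pair_not_mem G hwt i j hij this

lemma n16_eq_n8 (F : Finset V24) (hone : allOnes ∈ F)
    (hadd : ∀ a ∈ F, ∀ b ∈ F, a + b ∈ F) : nw F 16 = nw F 8 := by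
  apply card_add_bij _ _ allOnes
  intro c
  simp only [Finset.mem_filter]
  constructor
  · rintro ⟨hc, hwc⟩
    refine ⟨hadd c hc allOnes hone, ?_⟩
    have := wt_add_allOnes c
    omega
  · rintro ⟨hc, hwc⟩
    have hcF : c ∈ F := by
      have := hadd _ hc allOnes hone
      rwa [add_assoc, v24_add_self, add_zero] at this
    refine ⟨hcF, ?_⟩
    have := wt_add_allOnes c
    omega

include hdim hselfdual hwt in
lemma nG8_eq : nw (Gf G) 8 = 759 := by
  have hmom := moment2 (Gf G) (Gf_add G)
  have hdec := sum2_decomp (Gf G) (fun c hc => wt_five G hwt c ((mem_Gf G c).mp hc))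
  have hn0 : nw (Gf G) 0 = 1 := nw_zero _ (Gf_zero G)
  have hone : allOnes ∈ Gf G := (mem_Gf G allOnes).mpr (allOnes_mem G hdim hselfdual hwt)
  have hn24 : nw (Gf G) 24 = 1 := nw_24_mem _ hone
  have hn16 : nw (Gf G) 16 = nw (Gf G) 8 := n16_eq_n8 _ hone (Gf_add G)
  have hp2 : p2 (Gf G) = 0 := p2_Gf_zero G hdim hselfdual hwt
  have hcard : (Gf G).card = 4096 := cardGf G hdim
  rw [hdec, hn0, hn24, hn16, hp2, hcard] at hmom
  omega

section HyperplaneCount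

variable (Phi : V24 →ₗ[ZMod 2] ZMod 2)

include hdim hselfdual hwt in
lemma hyper_even (hPhi : ∃ c0 ∈ G, Phi c0 = 1) (hone : Phi allOnes = 0) :
    nw (Hf G Phi) 8 = 375 ∨ nw (Hf G Phi) 8 = 407 := by
  have honeH : allOnes ∈ Hf G Phi :=
    (mem_Hf G Phi allOnes).mpr ⟨allOnes_mem G hdim hselfdual hwt, hone⟩
  have hmom := moment2 (Hf G Phi) (Hf_add G Phi)
  have hdec := sum2_decomp (Hf G Phi)
    (fun c hc => wt_five G hwt c ((mem_Hf G Phi c).mp hc).1)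
  have hn0 : nw (Hf G Phi) 0 = 1 := nw_zero _ (Hf_zero G Phi)
  have hn24 : nw (Hf G Phi) 24 = 1 := nw_24_mem _ honeH
  have hn16 : nw (Hf G Phi) 16 = nw (Hf G Phi) 8 := n16_eq_n8 _ honeH (Hf_add G Phi)
  have hcard : (Hf G Phi).card = 2048 := cardHf G hdim Phi hPhi
  have hp2 := p2_Hf_cases G hdim hselfdual hwt Phi hPhi
  rw [hdec, hn0, hn24, hn16, hcard] at hmom
  rcases hp2 with h | h <;> rw [h] at hmom
  · left; omega
  · right; omega

include hdim hselfdual hwt in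
lemma hyper_even_pair (hPhi : ∃ c0 ∈ G, Phi c0 = 1) (hone : Phi allOnes = 0)
    (hpair : ∀ c ∈ Hf G Phi, dot c (eu 0 + eu 1) = 0) :
    nw (Hf G Phi) 8 = 407 := by
  have honeH : allOnes ∈ Hf G Phi :=
    (mem_Hf G Phi allOnes).mpr ⟨allOnes_mem G hdim hselfdual hwt, hone⟩
  have hmom := moment2 (Hf G Phi) (Hf_add G Phi)
  have hdec := sum2_decomp (Hf G Phi)
    (fun c hc => wt_five G hwt c ((mem_Hf G Phi c).mp hc).1)
  have hn0 : nw (Hf G Phi) 0 = 1 := nw_zero _ (Hf_zero G Phi)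
  have hn24 : nw (Hf G Phi) 24 = 1 := nw_24_mem _ honeH
  have hn16 : nw (Hf G Phi) 16 = nw (Hf G Phi) 8 := n16_eq_n8 _ honeH (Hf_add G Phi)
  have hcard : (Hf G Phi).card = 2048 := cardHf G hdim Phi hPhi
  have hp2 : p2 (Hf G Phi) = 2 := by
    classical
    rcases p2_Hf_cases G hdim hselfdual hwt Phi hPhi with h | h
    · exfalso
      rw [p2, Finset.card_eq_zero, Finset.filter_eq_empty_iff] at h
      have := h (Finset.mem_univ ((0 : Fin 24), (1 : Fin 24)))
      simp only [ne_eq, not_and] at this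
      exact absurd hpair (this (by decide))
    · exact h
  rw [hdec, hn0, hn24, hn16, hcard, hp2] at hmom
  omega

include hdim hselfdual hwt in
lemma hyper_odd (hPhi : ∃ c0 ∈ G, Phi c0 = 1) (hone : Phi allOnes = 1) :
    nw (Hf G Phi) 8 = 378 ∨ nw (Hf G Phi) 8 = 506 := by
  classical
  have honeH : allOnes ∉ Hf G Phi := by
    rw [mem_Hf]
    rintro ⟨-, h⟩
    rw [hone] at h
    exact one_ne_zero h
  have hmom := moment1 (Hf G Phi) (Hf_add G Phi)
  have hdec := sum1_decomp (Hf G Phi)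
    (fun c hc => wt_five G hwt c ((mem_Hf G Phi c).mp hc).1)
  have hn0 : nw (Hf G Phi) 0 = 1 := nw_zero _ (Hf_zero G Phi)
  have hn24 : nw (Hf G Phi) 24 = 0 := nw_24_not_mem _ honeH
  -- octads of the complement coset
  have hn16 : nw (Hf G Phi) 16 + nw (Hf G Phi) 8 = 759 := by
    have hbij : nw (Hf G Phi) 16
        = ((Gf G).filter (fun c => ¬ Phi c = 0 ∧ wt c = 8)).card := by
      apply card_add_bij _ _ allOnes
      intro c
      simp only [Finset.mem_filter, mem_Hf, mem_Gf]
      constructor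
      · rintro ⟨⟨hcG, hcPhi⟩, hwc⟩
        have hmem : c + allOnes ∈ G :=
          G.add_mem hcG (allOnes_mem G hdim hselfdual hwt)
        refine ⟨hmem, ?_, ?_⟩
        · rw [map_add, hcPhi, hone, zero_add]; exact one_ne_zero
        · have := wt_add_allOnes c; omega
      · rintro ⟨hmem, hPhi', hwc⟩
        have hcG : c ∈ G := by
          have := G.add_mem hmem (allOnes_mem G hdim hselfdual hwt)
          rwa [add_assoc, v24_add_self, add_zero] at this
        have hcPhi : Phi c = 0 := by
          have h2 : Phi c + Phi allOnes = Phi (c + allOnes) := (map_add Phi c allOnes).symm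
          rw [hone, zmod2_ne_zero hPhi'] at h2
          rcases zmod2_cases (Phi c) with h | h
          · exact h
          · rw [h] at h2; exact absurd h2 (by decide)
        refine ⟨⟨hcG, hcPhi⟩, ?_⟩
        have := wt_add_allOnes c; omega
    have hsplit : ((Gf G).filter (fun c => wt c = 8 ∧ Phi c = 0)).card
        + ((Gf G).filter (fun c => wt c = 8 ∧ ¬ Phi c = 0)).card = 759 := by
      have h2 := Finset.card_filter_add_card_filter_not
        (s := (Gf G).filter (fun c => wt c = 8)) (p := fun c => Phi c = 0)
      rw [Finset.filter_filter, Finset.filter_filter] at h2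
      rw [← nG8_eq G hdim hselfdual hwt]
      exact h2
    have e1 : nw (Hf G Phi) 8 = ((Gf G).filter (fun c => wt c = 8 ∧ Phi c = 0)).card := by
      rw [nw, Hf, Finset.filter_filter]
      congr 1
      ext c
      simp only [Finset.mem_filter]
      tauto
    have e2 : ((Gf G).filter (fun c => ¬ Phi c = 0 ∧ wt c = 8)).card
        = ((Gf G).filter (fun c => wt c = 8 ∧ ¬ Phi c = 0)).card := by
      congr 1
      ext c
      simp only [Finset.mem_filter]
      tauto
    omega
  have hcard : (Hf G Phi).card = 2048 := cardHf G hdim Phi hPhi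
  have hp1 : p1 (Hf G Phi) ≤ 1 := p1_Hf_le G hdim hselfdual hwt Phi hPhi
  rw [hdec, hn0, hn24, hcard] at hmom
  interval_cases h : p1 (Hf G Phi) <;> omega

end HyperplaneCount

include hdim hselfdual hwt in
lemma nw_Hf_eq (Phi : V24 →ₗ[ZMod 2] ZMod 2) :
    nw (Hf G Phi) 8 = ((Gf G).filter (fun c => wt c = 8 ∧ Phi c = 0)).card := by
  rw [nw, Hf, Finset.filter_filter]
  congr 1
  ext c
  simp only [Finset.mem_filter]
  tauto

end Hyperplane

end Code

/-- the functional `c ↦ c 0 + c 1` -/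
noncomputable def Phig : V24 →ₗ[ZMod 2] ZMod 2 :=
  (LinearMap.proj (R := ZMod 2) (φ := fun _ : Fin 24 => ZMod 2) 0)
    + (LinearMap.proj (R := ZMod 2) (φ := fun _ : Fin 24 => ZMod 2) 1)

lemma Phig_apply (c : V24) : Phig c = c 0 + c 1 := rfl

lemma patt_iff (c : V24) :
    ((c 0 = 1 ∧ c 1 = 0) ∨ (c 0 = 0 ∧ c 1 = 1)) ↔ c 0 + c 1 = 1 := by
  rcases zmod2_cases (c 0) with h0 | h0 <;> rcases zmod2_cases (c 1) with h1 | h1 <;>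
    rw [h0, h1] <;> decide

lemma dot_eu01 (c : V24) : dot c (eu 0 + eu 1) = c 0 + c 1 := by
  rw [dot_add_right, dot_eu, dot_eu]

end GolayAux

open GolayAux

/-- In the extended binary Golay code (characterized here as a 12-dimensional self-dual
binary code of length 24 all of whose codeword weights lie in {0, 8, 12, 16, 24}), the 352
octads (weight-8 codewords) whose first two coordinates are `(1,0)` or `(0,1)` generate
the whole code as an `𝔽₂`-vector space. -/
theorem golay_special_octads_generate (G : Submodule (ZMod 2) (Fin 24 → ZMod 2))
    (hdim : Module.finrank (ZMod 2) G = 12)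
    (hselfdual : ∀ c ∈ G, ∀ d ∈ G, ∑ i, c i * d i = 0)
    (hwt : ∀ c ∈ G, wt c ∈ ({0, 8, 12, 16, 24} : Set ℕ)) :
    Submodule.span (ZMod 2)
      {c : Fin 24 → ZMod 2 | c ∈ G ∧ wt c = 8 ∧
        ((c 0 = 1 ∧ c 1 = 0) ∨ (c 0 = 0 ∧ c 1 = 1))} = G := by
  classical
  set S : Set V24 := {c : Fin 24 → ZMod 2 | c ∈ G ∧ wt c = 8 ∧
        ((c 0 = 1 ∧ c 1 = 0) ∨ (c 0 = 0 ∧ c 1 = 1))} with hS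
  -- Phig is nonzero on G
  have hPhig_ex : ∃ c0 ∈ G, Phig c0 = 1 := by
    by_contra hcon
    push_neg at hcon
    have : eu 0 + eu 1 ∈ G := by
      apply mem_orth G hdim hselfdual
      intro c hc
      rw [dot_eu01, ← Phig_apply]
      rcases zmod2_cases (Phig c) with h | h
      · exact h
      · exact absurd h (hcon c hc)
    exact eu_pair_not_mem G hwt 0 1 (by decide) this
  have hPhig_one : Phig allOnes = 0 := by rw [Phig_apply]; decide
  -- the count of octads with c0 + c1 = 0 is 407
  have hG0 : nw (Hf G Phig) 8 = 407 := by
    apply hyper_even_pair G hdim hselfdual hwt Phig hPhig_ex hPhig_one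
    intro c hc
    rw [mem_Hf] at hc
    rw [dot_eu01, ← Phig_apply, hc.2]
  -- the count of special octads is 352
  have hsplit : ((Gf G).filter (fun c => wt c = 8 ∧ Phig c = 0)).card
      + ((Gf G).filter (fun c => wt c = 8 ∧ ¬ Phig c = 0)).card = 759 := by
    have h2 := Finset.card_filter_add_card_filter_not
      (s := (Gf G).filter (fun c => wt c = 8)) (p := fun c => Phig c = 0)
    rw [Finset.filter_filter, Finset.filter_filter] at h2
    rw [← nG8_eq G hdim hselfdual hwt]
    exact h2
  have hS352 : ((Gf G).filter (fun c => wt c = 8 ∧ ¬ Phig c = 0)).card = 352 := by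
    have := nw_Hf_eq G hdim hselfdual hwt Phig
    omega
  -- suppose the span is proper
  by_contra hne
  have hle : Submodule.span (ZMod 2) S ≤ G := by
    rw [Submodule.span_le]
    intro c hc
    exact hc.1
  obtain ⟨x, hxG, hxS⟩ := SetLike.exists_of_lt (lt_of_le_of_ne hle hne)
  obtain ⟨f, hfx, hfmap⟩ :=
    Submodule.exists_dual_map_eq_bot_of_notMem (p := Submodule.span (ZMod 2) S) hxS inferInstance
  have hfS : ∀ c ∈ Submodule.span (ZMod 2) S, f c = 0 := by
    intro c hc
    have : f c ∈ (Submodule.span (ZMod 2) S).map f := Submodule.mem_map_of_mem hc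
    rw [hfmap] at this
    exact (Submodule.mem_bot _).mp this
  have hf_ex : ∃ c0 ∈ G, f c0 = 1 := ⟨x, hxG, zmod2_ne_zero hfx⟩
  have hSker : ∀ c, c ∈ G → wt c = 8 → Phig c = 1 → f c = 0 := by
    intro c hcG hc8 hcp
    apply hfS
    apply Submodule.subset_span
    rw [hS]
    refine ⟨hcG, hc8, ?_⟩
    rw [patt_iff, ← Phig_apply]
    exact hcp
  set f' : V24 →ₗ[ZMod 2] ZMod 2 := f + Phig with hf'
  have hf'_apply : ∀ c, f' c = f c + Phig c := fun c => rfl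
  -- the key counting identity
  have claim1 : nw (Hf G f) 8 = 352 + nw (Hf G f') 8 := by
    have e0 := nw_Hf_eq G hdim hselfdual hwt f
    have e0' := nw_Hf_eq G hdim hselfdual hwt f'
    have esplit := Finset.card_filter_add_card_filter_not
      (s := (Gf G).filter (fun c => wt c = 8 ∧ f c = 0)) (p := fun c => Phig c = 0)
    rw [Finset.filter_filter, Finset.filter_filter] at esplit
    have eA : ((Gf G).filter (fun c => (wt c = 8 ∧ f c = 0) ∧ ¬ Phig c = 0)).card
        = ((Gf G).filter (fun c => wt c = 8 ∧ ¬ Phig c = 0)).card := by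
      congr 1
      apply Finset.filter_congr
      intro c hc
      rw [mem_Gf] at hc
      constructor
      · rintro ⟨⟨h8, -⟩, hp⟩; exact ⟨h8, hp⟩
      · rintro ⟨h8, hp⟩
        exact ⟨⟨h8, hSker c hc h8 (zmod2_ne_zero hp)⟩, hp⟩
    have eB : ((Gf G).filter (fun c => (wt c = 8 ∧ f c = 0) ∧ Phig c = 0)).card
        = ((Gf G).filter (fun c => wt c = 8 ∧ f' c = 0)).card := by
      congr 1
      apply Finset.filter_congr
      intro c hc
      rw [mem_Gf] at hc
      constructor
      · rintro ⟨⟨h8, hf0⟩, hp⟩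
        refine ⟨h8, ?_⟩
        rw [hf'_apply, hf0, hp, add_zero]
      · rintro ⟨h8, hf0⟩
        rw [hf'_apply] at hf0
        rcases zmod2_cases (Phig c) with hp | hp
        · refine ⟨⟨h8, ?_⟩, hp⟩
          rwa [hp, add_zero] at hf0
        · exfalso
          have := hSker c hc h8 hp
          rw [this, hp, zero_add] at hf0
          exact one_ne_zero hf0
    omega
  have claim2 : ∃ c0 ∈ G, f' c0 = 1 := by
    have hpos : (0 : ℕ) < ((Gf G).filter (fun c => wt c = 8 ∧ ¬ Phig c = 0)).card := by
      rw [hS352]; norm_num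
    obtain ⟨s, hs⟩ := Finset.card_pos.mp hpos
    rw [Finset.mem_filter, mem_Gf] at hs
    obtain ⟨hsG, hs8, hsp⟩ := hs
    refine ⟨s, hsG, ?_⟩
    rw [hf'_apply, hSker s hsG hs8 (zmod2_ne_zero hsp), zero_add]
    exact zmod2_ne_zero hsp
  -- final case analysis
  rcases zmod2_cases (f allOnes) with hone | hone
  · have hone' : f' allOnes = 0 := by
      rw [hf'_apply, hone, hPhig_one, add_zero]
    have h1 := hyper_even G hdim hselfdual hwt f hf_ex hone
    have h2 := hyper_even G hdim hselfdual hwt f' claim2 hone'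
    omega
  · have hone' : f' allOnes = 1 := by
      rw [hf'_apply, hone, hPhig_one, add_zero]
    have h1 := hyper_odd G hdim hselfdual hwt f hf_ex hone
    have h2 := hyper_odd G hdim hselfdual hwt f' claim2 hone'
    omega
end

section
/- Every codeword of the extended binary Golay code has weight 0, 8, 12, 16, or 24; in particular, the minimum distance of the code is 8 and the code is antipodal (closed under complementation). -/
open scoped BigOperators

/-- The first row of the circulant matrix `B₁₁`: ones at positions `{0,1,3,4,5,9}`
(position 0 together with the quadratic residues mod 11), i.e. `[11011100010]`. -/
def golayRow : Fin 11 → ZMod 2 := fun j =>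
  if (j : ℕ) ∈ ({0, 1, 3, 4, 5, 9} : Finset ℕ) then 1 else 0

/-- The `11 × 11` circulant matrix whose `i`-th row is the `i`-fold cyclic right shift of
`golayRow`. -/
def B11 : Fin 11 → Fin 11 → ZMod 2 := fun i j => golayRow (j - i)

/-- The `12 × 12` matrix `B₁₂` obtained from `B₁₁` by appending the row
`[111111111110]` and its transpose as a last column. -/
def B12 : Fin 12 → Fin 12 → ZMod 2 := fun i j =>
  if hi : (i : ℕ) < 11 then
    if hj : (j : ℕ) < 11 then B11 ⟨(i : ℕ), hi⟩ ⟨(j : ℕ), hj⟩ else 1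
  else
    if (j : ℕ) < 11 then 1 else 0

/-- The rows of the generator matrix `[I₁₂ | B₁₂]` of the extended binary Golay code. -/
def golayGen (i : Fin 12) : Fin 24 → ZMod 2 := fun j =>
  if hj : (j : ℕ) < 12 then (if (j : ℕ) = (i : ℕ) then 1 else 0)
  else B12 i ⟨(j : ℕ) - 12, by have := j.isLt; omega⟩

/-- The extended binary Golay code: the span of the rows of `[I₁₂ | B₁₂]`. -/
def GolayCode : Submodule (ZMod 2) (Fin 24 → ZMod 2) :=
  Submodule.span (ZMod 2) (Set.range golayGen)

/-! ## Auxiliary machinery -/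

def gmask : Fin 12 → ℕ :=
  ![0xa3b001, 0xc76002, 0x8ed004, 0x9da008, 0xbb4010, 0xf68020,
    0xed1040, 0xda3080, 0xb47100, 0xe8e200, 0xd1d400, 0x7ff800]

/-- The `j`-th bit of `m`, as an element of `ZMod 2`. -/
def bitZ (m j : ℕ) : ZMod 2 := ((m >>> j % 2 : ℕ) : ZMod 2)

def gstep (n : ℕ) (i : Fin 12) (acc : ℕ) : ℕ :=
  (if n >>> (i : ℕ) % 2 = 1 then gmask i else 0) ^^^ acc

def codeN (n : ℕ) : ℕ := (List.finRange 12).foldr (gstep n) 0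

def pop24 (m : ℕ) : ℕ := (List.range 24).countP fun j => m >>> j % 2 = 1

def checkG (n : ℕ) : Bool := decide (pop24 (codeN n) ∈ ([0, 8, 12, 16, 24] : List ℕ))

def aOf (n : ℕ) : Fin 12 → ZMod 2 := fun i => bitZ n (i : ℕ)

def combo (a : Fin 12 → ZMod 2) : Fin 24 → ZMod 2 := fun j => ∑ i, a i * golayGen i j

lemma bit01 (m j : ℕ) : m >>> j % 2 = 0 ∨ m >>> j % 2 = 1 := by omega

lemma bitZ_zero (j : ℕ) : bitZ 0 j = 0 := by
  simp [bitZ, Nat.zero_shiftRight]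

lemma bitZ_xor (x y j : ℕ) : bitZ (x ^^^ y) j = bitZ x j + bitZ y j := by
  have hs : (x ^^^ y) >>> j = (x >>> j) ^^^ (y >>> j) := by
    apply Nat.eq_of_testBit_eq
    intro i
    simp [Nat.testBit_shiftRight, Nat.testBit_xor]
  rw [bitZ, bitZ, bitZ, hs, Nat.xor_mod_two_eq, ZMod.natCast_mod, ZMod.natCast_mod,
    ZMod.natCast_mod, Nat.cast_add]

lemma bitZ_eq_one_iff (m j : ℕ) : bitZ m j = 1 ↔ m >>> j % 2 = 1 := by
  rcases bit01 m j with h | h <;> rw [bitZ, h]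
  · simp only [Nat.cast_zero]
    exact ⟨fun h' => absurd h' (by decide), fun h' => absurd h' (by omega)⟩
  · simp

lemma gen_eq_mask : ∀ (i : Fin 12) (j : Fin 24), golayGen i j = bitZ (gmask i) (j : ℕ) := by
  decide

lemma codeN_bit (n : ℕ) (j : Fin 24) :
    bitZ (codeN n) (j : ℕ) = combo (aOf n) j := by
  rw [combo, Fin.sum_univ_def]
  have key : ∀ l : List (Fin 12),
      bitZ (l.foldr (gstep n) 0) (j : ℕ) = (l.map fun i => aOf n i * golayGen i j).sum := by
    intro l
    induction l with
    | nil => simpa using bitZ_zero (j : ℕ)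
    | cons x xs ih =>
      rw [List.foldr_cons, List.map_cons, List.sum_cons, gstep, bitZ_xor, ih]
      congr 1
      rcases bit01 n (x : ℕ) with h | h
      · rw [if_neg (by omega), bitZ_zero]
        have hx : aOf n x = 0 := by simp [aOf, bitZ, h]
        rw [hx, zero_mul]
      · rw [if_pos h]
        have hx : aOf n x = 1 := by simp [aOf, bitZ, h]
        rw [hx, one_mul, gen_eq_mask]
  exact key _

lemma countP_eq_sum (l : List ℕ) (q : ℕ → Bool) :
    l.countP q = (l.map fun x => if q x then 1 else 0).sum := by
  induction l with
  | nil => rfl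
  | cons x xs ih =>
    rw [List.countP_cons, List.map_cons, List.sum_cons, ih]
    by_cases h : q x <;> simp [h, Nat.add_comm]

lemma card_filter_eq_countP (p : ℕ → Prop) [DecidablePred p] :
    (Finset.univ.filter fun j : Fin 24 => p (j : ℕ)).card
      = (List.range 24).countP fun j => decide (p j) := by
  rw [Finset.card_filter, Fin.sum_univ_eq_sum_range (fun j => if p j then 1 else 0),
    countP_eq_sum]
  simp only [Finset.sum, Finset.range, Multiset.range, Multiset.map_coe, Multiset.sum_coe,
    decide_eq_true_eq]

set_option maxHeartbeats 1000000 in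
lemma wt_combo_aOf (n : ℕ) : wt (combo (aOf n)) = pop24 (codeN n) := by
  have h1 : wt (combo (aOf n))
      = (Finset.univ.filter fun j : Fin 24 => codeN n >>> (j : ℕ) % 2 = 1).card := by
    unfold wt
    congr 1
    apply Finset.filter_congr
    intro j _
    rw [← codeN_bit, bitZ_eq_one_iff]
  rw [h1, pop24, card_filter_eq_countP (fun j => codeN n >>> j % 2 = 1)]

set_option maxRecDepth 10000 in
set_option maxHeartbeats 400000000 in
lemma enum_ok : ((List.range 16).all fun k =>
    (List.range 256).all fun r => checkG (256 * k + r)) = true := by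
  decide

lemma check_all (n : ℕ) (h : n < 4096) : pop24 (codeN n) ∈ ([0, 8, 12, 16, 24] : List ℕ) := by
  have h1 := List.all_eq_true.mp enum_ok (n / 256) (List.mem_range.mpr (by omega))
  have h2 := List.all_eq_true.mp h1 (n % 256) (List.mem_range.mpr (by omega))
  have h3 : 256 * (n / 256) + n % 256 = n := Nat.div_add_mod n 256
  rw [h3] at h2
  exact of_decide_eq_true h2

lemma aOf_inj : Function.Injective (fun n : Fin 4096 => aOf (n : ℕ)) := by
  intro m n h
  have hb : ∀ i : ℕ, (m : ℕ).testBit i = (n : ℕ).testBit i := by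
    intro i
    by_cases hi : i < 12
    · have hc := congrFun h ⟨i, hi⟩
      simp only [aOf, bitZ] at hc
      have h2 : (m : ℕ) >>> i % 2 = (n : ℕ) >>> i % 2 := by
        rcases bit01 (m : ℕ) i with h1 | h1 <;> rcases bit01 (n : ℕ) i with h2 | h2 <;>
          rw [h1, h2] at hc ⊢ <;> first | rfl | (exfalso; revert hc; decide)
      rw [Nat.testBit_eq_decide_div_mod_eq, Nat.testBit_eq_decide_div_mod_eq, ← Nat.shiftRight_eq_div_pow,
        ← Nat.shiftRight_eq_div_pow, h2]
    · have hm : (m : ℕ) < 2 ^ i := lt_of_lt_of_le m.isLt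
        (by calc (4096 : ℕ) = 2 ^ 12 := by norm_num
            _ ≤ 2 ^ i := Nat.pow_le_pow_right (by norm_num) (by omega))
      have hn : (n : ℕ) < 2 ^ i := lt_of_lt_of_le n.isLt
        (by calc (4096 : ℕ) = 2 ^ 12 := by norm_num
            _ ≤ 2 ^ i := Nat.pow_le_pow_right (by norm_num) (by omega))
      rw [Nat.testBit_lt_two_pow hm, Nat.testBit_lt_two_pow hn]
  exact Fin.ext (Nat.eq_of_testBit_eq hb)

lemma aOf_surj (a : Fin 12 → ZMod 2) : ∃ n : Fin 4096, aOf (n : ℕ) = a := by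
  have hcard : Fintype.card (Fin 4096) = Fintype.card (Fin 12 → ZMod 2) := by
    rw [Fintype.card_fun, ZMod.card, Fintype.card_fin, Fintype.card_fin]
    norm_num
  exact ((Fintype.bijective_iff_injective_and_card
    (fun n : Fin 4096 => aOf (n : ℕ))).mpr ⟨aOf_inj, hcard⟩).surjective a

lemma mem_iff_combo (c : Fin 24 → ZMod 2) : c ∈ GolayCode ↔ ∃ a, combo a = c := by
  rw [GolayCode, Finsupp.mem_span_range_iff_exists_finsupp]
  constructor
  · rintro ⟨f, hf⟩
    refine ⟨f, ?_⟩
    rw [← hf]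
    funext j
    rw [combo]
    rw [Finsupp.sum_fintype _ _ (fun i => by simp)]
    simp [Finset.sum_apply, mul_comm]
  · rintro ⟨a, rfl⟩
    refine ⟨Finsupp.equivFunOnFinite.symm a, ?_⟩
    funext j
    rw [combo, Finsupp.sum_fintype _ _ (fun i => by simp)]
    simp [Finset.sum_apply, mul_comm]

lemma wt_mem (a : Fin 12 → ZMod 2) : wt (combo a) ∈ ({0, 8, 12, 16, 24} : Set ℕ) := by
  obtain ⟨n, rfl⟩ := aOf_surj a
  rw [wt_combo_aOf]
  have := check_all (n : ℕ) n.isLt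
  simpa using this

lemma wt_zero_imp (c : Fin 24 → ZMod 2) (h : wt c = 0) : c = 0 := by
  funext j
  have := Finset.card_eq_zero.mp h
  have hj : j ∉ Finset.univ.filter fun i => c i = 1 := by rw [this]; exact Finset.notMem_empty j
  simp only [Finset.mem_filter, Finset.mem_univ, true_and] at hj
  have : ∀ x : ZMod 2, x ≠ 1 → x = 0 := by decide
  exact this _ hj

lemma ones_mem : (fun _ => 1 : Fin 24 → ZMod 2) ∈ GolayCode := by
  rw [mem_iff_combo]
  refine ⟨fun _ => 1, ?_⟩
  funext j
  rw [combo]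
  have : ∀ j : Fin 24, (∑ i : Fin 12, golayGen i j) = 1 := by decide
  simpa using this j


/-- Every codeword of the extended binary Golay code has weight 0, 8, 12, 16 or 24;
in particular the minimum distance of the code is 8 (it is at least 8 and weight-8
codewords exist), and the code is antipodal (closed under complementation). -/
theorem golay_weights :
    (∀ c ∈ GolayCode, wt c ∈ ({0, 8, 12, 16, 24} : Set ℕ)) ∧
    (∀ c ∈ GolayCode, ∀ d ∈ GolayCode, c ≠ d →
      8 ≤ (Finset.univ.filter fun i => c i ≠ d i).card) ∧
    (∃ c ∈ GolayCode, wt c = 8) ∧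
    (∀ c ∈ GolayCode, (c + fun _ => 1) ∈ GolayCode) := by
  have hwt : ∀ c ∈ GolayCode, wt c ∈ ({0, 8, 12, 16, 24} : Set ℕ) := by
    intro c hc
    obtain ⟨a, rfl⟩ := (mem_iff_combo c).mp hc
    exact wt_mem a
  refine ⟨hwt, ?_, ?_, ?_⟩
  · intro c hc d hd hne
    have hsub : c - d ∈ GolayCode := sub_mem hc hd
    have hfe : (Finset.univ.filter fun i => c i ≠ d i)
        = Finset.univ.filter fun i => (c - d) i = 1 := by
      apply Finset.filter_congr
      intro i _
      have : ∀ x y : ZMod 2, (¬ x = y) ↔ x - y = 1 := by decide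
      simp only [Pi.sub_apply]
      exact this (c i) (d i)
    rw [hfe]
    have hw := hwt _ hsub
    have hne0 : wt (c - d) ≠ 0 := by
      intro h0
      exact hne (by
        have := wt_zero_imp _ h0
        have := sub_eq_zero.mp this
        exact this)
    have : wt (c - d) = (Finset.univ.filter fun i => (c - d) i = 1).card := rfl
    rw [← this]
    simp only [Set.mem_insert_iff, Set.mem_singleton_iff] at hw
    omega
  · refine ⟨golayGen 0, Submodule.subset_span ⟨0, rfl⟩, ?_⟩
    decide
  · intro c hc
    exact Submodule.add_mem _ hc ones_mem
end

section
/- The vectors of squared length 6 in the Leech lattice span the Leech lattice over ℤ: every Leech lattice vector is an integer linear combination of vectors of norm 6. -/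
open scoped BigOperators

/-- The (√8-scaled) Leech lattice: integer vectors `x` such that for some `m ∈ {0,1}`
all `x i ≡ m (mod 2)`, the reduction `((x i - m)/2 mod 2)` is a Golay codeword, and
`∑ x i ≡ 4m (mod 8)`. -/
def IsLeech (x : Fin 24 → ℤ) : Prop :=
  ∃ m : ℤ, (m = 0 ∨ m = 1) ∧ (∀ i, (2:ℤ) ∣ (x i - m)) ∧
    ((fun i => (((x i - m) / 2 : ℤ) : ZMod 2)) ∈ GolayCode) ∧
    (8:ℤ) ∣ ((∑ i, x i) - 4 * m)

/- ========== auxiliary development ========== -/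

abbrev SS : Set (Fin 24 → ℤ) := {x : Fin 24 → ℤ | IsLeech x ∧ ∑ i, (x i) ^ 2 = 48}

abbrev LC : AddSubgroup (Fin 24 → ℤ) := AddSubgroup.closure SS

def Oc0 : Finset (Fin 24) := {0,12,13,15,16,17,21,23}
def Oc2 : Finset (Fin 24) := {6,7,8,9,11,14,18,20}
def DD : Finset (Fin 24) := {11,12,13,14,15,16,17,18,19,20,21,22}
def Wv : Fin 24 → ℤ := fun i => if i = 0 then 5 else 1

lemma memSS (v : Fin 24 → ℤ) (heven : ∀ i, (2:ℤ) ∣ v i)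
    (hword : (fun i => ((v i / 2 : ℤ) : ZMod 2)) ∈ GolayCode)
    (hsum : (8:ℤ) ∣ ∑ i, v i) (hnorm : ∑ i, (v i) ^ 2 = 48) : v ∈ SS := by
  refine ⟨⟨0, Or.inl rfl, ?_, ?_, ?_⟩, hnorm⟩
  · simpa using heven
  · simpa using hword
  · simpa using hsum

def ovP (O : Finset (Fin 24)) (q a : Fin 24) : Fin 24 → ℤ :=
  fun k => (if k = q then 4 else 0) + (if k ∈ O then 2 else 0) - (if k = a then 4 else 0)

def ovN (O : Finset (Fin 24)) (q a : Fin 24) : Fin 24 → ℤ :=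
  fun k => (if k = q then 4 else 0) - (if k ∈ O then 2 else 0) + (if k = a then 4 else 0)

lemma sum_ite_card (O : Finset (Fin 24)) (c : ℤ) :
    ∑ i : Fin 24, (if i ∈ O then c else 0) = O.card * c := by
  rw [Finset.sum_ite_mem, Finset.univ_inter, Finset.sum_const, nsmul_eq_mul]

lemma sum_ite_single (q : Fin 24) (c : ℤ) :
    ∑ i : Fin 24, (if i = q then c else 0) = c := by
  simp [Finset.sum_ite_eq']

lemma ovP_memSS (O : Finset (Fin 24)) (q a : Fin 24) (hq : q ∉ O) (ha : a ∈ O)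
    (hcard : O.card = 8)
    (hO : (fun i => if i ∈ O then (1:ZMod 2) else 0) ∈ GolayCode) : ovP O q a ∈ SS := by
  have hqa : q ≠ a := fun h => hq (h ▸ ha)
  have haq : a ≠ q := fun h => hq (h ▸ ha)
  have hval : ∀ i, ovP O q a i =
      if i = q then 4 else if i = a then (-2) else if i ∈ O then (2) else 0 := by
    intro i
    simp only [ovP]
    split_ifs <;> subst_vars <;> first | (simp_all; done) | norm_num
  apply memSS
  · intro i; rw [hval i]; split_ifs <;> norm_num
  · have e : (fun i => ((ovP O q a i / 2 : ℤ) : ZMod 2))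
        = (fun i => if i ∈ O then (1:ZMod 2) else 0) := by
      funext i
      rw [hval i]
      split_ifs <;> subst_vars <;> first | (simp_all; done) | decide
    rw [e]; exact hO
  · have e : ∀ i, ovP O q a i
        = (if i = q then (4:ℤ) else 0) + (if i = a then ((-2:ℤ) - (2)) else 0)
          + (if i ∈ O then (2:ℤ) else 0) := by
      intro i
      rw [hval i]
      split_ifs <;> subst_vars <;> first | (simp_all; done) | norm_num
    rw [Finset.sum_congr rfl fun i _ => e i, Finset.sum_add_distrib, Finset.sum_add_distrib,
      sum_ite_single, sum_ite_single, sum_ite_card, hcard]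
    norm_num
  · have e : ∀ i, (ovP O q a i) ^ 2
        = (if i = q then (16:ℤ) else 0) + (if i ∈ O then 4 else 0) := by
      intro i
      rw [hval i]
      split_ifs <;> subst_vars <;> first | (simp_all; done) | norm_num
    rw [Finset.sum_congr rfl fun i _ => e i, Finset.sum_add_distrib, sum_ite_single,
      sum_ite_card, hcard]
    norm_num

lemma ovN_memSS (O : Finset (Fin 24)) (q a : Fin 24) (hq : q ∉ O) (ha : a ∈ O)
    (hcard : O.card = 8)
    (hO : (fun i => if i ∈ O then (1:ZMod 2) else 0) ∈ GolayCode) : ovN O q a ∈ SS := by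
  have hqa : q ≠ a := fun h => hq (h ▸ ha)
  have haq : a ≠ q := fun h => hq (h ▸ ha)
  have hval : ∀ i, ovN O q a i =
      if i = q then 4 else if i = a then (2) else if i ∈ O then (-2) else 0 := by
    intro i
    simp only [ovN]
    split_ifs <;> subst_vars <;> first | (simp_all; done) | norm_num
  apply memSS
  · intro i; rw [hval i]; split_ifs <;> norm_num
  · have e : (fun i => ((ovN O q a i / 2 : ℤ) : ZMod 2))
        = (fun i => if i ∈ O then (1:ZMod 2) else 0) := by
      funext i
      rw [hval i]
      split_ifs <;> subst_vars <;> first | (simp_all; done) | decide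
    rw [e]; exact hO
  · have e : ∀ i, ovN O q a i
        = (if i = q then (4:ℤ) else 0) + (if i = a then ((2:ℤ) - (-2)) else 0)
          + (if i ∈ O then (-2:ℤ) else 0) := by
      intro i
      rw [hval i]
      split_ifs <;> subst_vars <;> first | (simp_all; done) | norm_num
    rw [Finset.sum_congr rfl fun i _ => e i, Finset.sum_add_distrib, Finset.sum_add_distrib,
      sum_ite_single, sum_ite_single, sum_ite_card, hcard]
    norm_num
  · have e : ∀ i, (ovN O q a i) ^ 2
        = (if i = q then (16:ℤ) else 0) + (if i ∈ O then 4 else 0) := by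
      intro i
      rw [hval i]
      split_ifs <;> subst_vars <;> first | (simp_all; done) | norm_num
    rw [Finset.sum_congr rfl fun i _ => e i, Finset.sum_add_distrib, sum_ite_single,
      sum_ite_card, hcard]
    norm_num

lemma hOc0G : (fun i => if i ∈ Oc0 then (1:ZMod 2) else 0) ∈ GolayCode := by
  have h : (fun i => if i ∈ Oc0 then (1:ZMod 2) else 0) = golayGen 0 := by decide
  rw [h]; exact Submodule.subset_span ⟨0, rfl⟩

lemma hOc2G : (fun i => if i ∈ Oc2 then (1:ZMod 2) else 0) ∈ GolayCode := by
  have h : (fun i => if i ∈ Oc2 then (1:ZMod 2) else 0)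
      = golayGen 6 + golayGen 7 + golayGen 8 + golayGen 9 + golayGen 11 := by decide
  rw [h]
  exact add_mem (add_mem (add_mem (add_mem (Submodule.subset_span ⟨6, rfl⟩)
    (Submodule.subset_span ⟨7, rfl⟩)) (Submodule.subset_span ⟨8, rfl⟩))
    (Submodule.subset_span ⟨9, rfl⟩)) (Submodule.subset_span ⟨11, rfl⟩)

lemma diffO (O : Finset (Fin 24)) (q q' a : Fin 24) (hq : q ∉ O) (hq' : q' ∉ O)
    (ha : a ∈ O) (hcard : O.card = 8)
    (hO : (fun i => if i ∈ O then (1:ZMod 2) else 0) ∈ GolayCode) :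
    (fun k => (if k = q then (4:ℤ) else 0) - (if k = q' then 4 else 0)) ∈ LC := by
  have h := sub_mem (AddSubgroup.subset_closure (ovP_memSS O q a hq ha hcard hO))
    (AddSubgroup.subset_closure (ovP_memSS O q' a hq' ha hcard hO))
  have e : ovP O q a - ovP O q' a
      = fun k => (if k = q then (4:ℤ) else 0) - (if k = q' then 4 else 0) := by
    funext k; simp only [Pi.sub_apply, ovP]; ring
  rwa [e] at h

lemma d_mem (i : Fin 24) :
    (fun k => (if k = i then (4:ℤ) else 0) - (if k = (1:Fin 24) then 4 else 0)) ∈ LC := by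
  rcases eq_or_ne i 1 with rfl | hi
  · have e : (fun k => (if k = (1:Fin 24) then (4:ℤ) else 0) - (if k = (1:Fin 24) then 4 else 0))
        = (0 : Fin 24 → ℤ) := by funext k; simp
    rw [e]; exact zero_mem _
  · by_cases h : i ∈ Oc0
    · exact diffO Oc2 i 1 6 ((by decide : ∀ j, j ∈ Oc0 → j ∉ Oc2) i h) (by decide)
        (by decide) (by decide) hOc2G
    · exact diffO Oc0 i 1 0 h (by decide) (by decide) (by decide) hOc0G

lemma diff_any (q a : Fin 24) :
    (fun k => (if k = q then (4:ℤ) else 0) - (if k = a then 4 else 0)) ∈ LC := by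
  have h := sub_mem (d_mem q) (d_mem a)
  have e : ((fun k => (if k = q then (4:ℤ) else 0) - (if k = (1:Fin 24) then 4 else 0))
      - fun k => (if k = a then (4:ℤ) else 0) - (if k = (1:Fin 24) then 4 else 0))
      = fun k => (if k = q then (4:ℤ) else 0) - (if k = a then 4 else 0) := by
    funext k; simp only [Pi.sub_apply]; ring
  rwa [e] at h

lemma e8_mem : (fun k => if k = (1:Fin 24) then (8:ℤ) else 0) ∈ LC := by
  have h := add_mem (AddSubgroup.subset_closure (ovP_memSS Oc0 1 0 (by decide) (by decide) (by decide) hOc0G))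
    (AddSubgroup.subset_closure (ovN_memSS Oc0 1 0 (by decide) (by decide) (by decide) hOc0G))
  have e : ovP Oc0 1 0 + ovN Oc0 1 0 = fun k => if k = (1:Fin 24) then (8:ℤ) else 0 := by
    funext k
    simp only [Pi.add_apply, ovP, ovN]
    have hr : ∀ x y z : ℤ, (x + y - z) + (x - y + z) = 2 * x := by intros; ring
    rw [hr]
    by_cases hk : k = 1 <;> simp [hk]
  rwa [e] at h

def GoodWord (c : Fin 24 → ZMod 2) : Prop :=
  ∃ b : Fin 24 → ℤ, (fun i => 2 * b i) ∈ LC ∧ (∀ i, ((b i : ℤ) : ZMod 2) = c i)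
    ∧ (4:ℤ) ∣ ∑ i, b i

lemma goodword_oct (O : Finset (Fin 24)) (q a : Fin 24) (hq : q ∉ O) (ha : a ∈ O)
    (hcard : O.card = 8) (c : Fin 24 → ZMod 2)
    (hc : (fun i => if i ∈ O then (1:ZMod 2) else 0) = c) (hcG : c ∈ GolayCode) :
    GoodWord c := by
  refine ⟨fun i => if i ∈ O then 1 else 0, ?_, ?_, ?_⟩
  · have h := sub_mem (AddSubgroup.subset_closure
      (ovP_memSS O q a hq ha hcard (by rw [hc]; exact hcG))) (diff_any q a)
    have e : (ovP O q a - fun k => (if k = q then (4:ℤ) else 0) - (if k = a then 4 else 0))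
        = fun i => 2 * (if i ∈ O then (1:ℤ) else 0) := by
      funext k
      simp only [Pi.sub_apply, ovP, mul_ite, mul_one, mul_zero]
      ring
    rwa [e] at h
  · intro i
    rw [← congrFun hc i]
    by_cases h : i ∈ O <;> simp [h]
  · rw [sum_ite_card, hcard]; norm_num

lemma goodword_zero : GoodWord 0 := by
  refine ⟨0, ?_, by simp, by simp⟩
  have e : (fun i : Fin 24 => 2 * (0 : Fin 24 → ℤ) i) = 0 := by funext i; simp
  rw [e]; exact zero_mem _

lemma goodword_gen (j : Fin 12) : GoodWord (golayGen j) := by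
  fin_cases j
  · exact goodword_oct Oc0 1 0 (by decide) (by decide) (by decide) _ (by decide)
      (Submodule.subset_span ⟨0, rfl⟩)
  · exact goodword_oct {1,13,14,16,17,18,22,23} 0 1 (by decide) (by decide) (by decide) _
      (by decide) (Submodule.subset_span ⟨1, rfl⟩)
  · exact goodword_oct {2,12,14,15,17,18,19,23} 0 2 (by decide) (by decide) (by decide) _
      (by decide) (Submodule.subset_span ⟨2, rfl⟩)
  · exact goodword_oct {3,13,15,16,18,19,20,23} 0 3 (by decide) (by decide) (by decide) _
      (by decide) (Submodule.subset_span ⟨3, rfl⟩)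
  · exact goodword_oct {4,14,16,17,19,20,21,23} 0 4 (by decide) (by decide) (by decide) _
      (by decide) (Submodule.subset_span ⟨4, rfl⟩)
  · exact goodword_oct {5,15,17,18,20,21,22,23} 0 5 (by decide) (by decide) (by decide) _
      (by decide) (Submodule.subset_span ⟨5, rfl⟩)
  · exact goodword_oct {6,12,16,18,19,21,22,23} 0 6 (by decide) (by decide) (by decide) _
      (by decide) (Submodule.subset_span ⟨6, rfl⟩)
  · exact goodword_oct {7,12,13,17,19,20,22,23} 0 7 (by decide) (by decide) (by decide) _
      (by decide) (Submodule.subset_span ⟨7, rfl⟩)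
  · exact goodword_oct {8,12,13,14,18,20,21,23} 0 8 (by decide) (by decide) (by decide) _
      (by decide) (Submodule.subset_span ⟨8, rfl⟩)
  · exact goodword_oct {9,13,14,15,19,21,22,23} 0 9 (by decide) (by decide) (by decide) _
      (by decide) (Submodule.subset_span ⟨9, rfl⟩)
  · exact goodword_oct {10,12,14,15,16,20,22,23} 0 10 (by decide) (by decide) (by decide) _
      (by decide) (Submodule.subset_span ⟨10, rfl⟩)
  · -- dodecad row
    refine ⟨fun i => if i ∈ DD then 1 else 0, ?_, ?_, ?_⟩
    · apply AddSubgroup.subset_closure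
      apply memSS
      · intro i; exact dvd_mul_right 2 _
      · have e : (fun i : Fin 24 => ((2 * (if i ∈ DD then (1:ℤ) else 0) / 2 : ℤ) : ZMod 2))
            = golayGen 11 := by decide
        rw [e]; exact Submodule.subset_span ⟨11, rfl⟩
      · rw [show (∑ i : Fin 24, 2 * (if i ∈ DD then (1:ℤ) else 0)) = 24 from by decide]
        norm_num
      · decide
    · intro i
      exact congrFun (show (fun i : Fin 24 => (((if i ∈ DD then (1:ℤ) else 0) : ℤ) : ZMod 2))
        = golayGen 11 from by decide) i
    · rw [show (∑ i : Fin 24, (if i ∈ DD then (1:ℤ) else 0)) = 12 from by decide]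
      norm_num

lemma goodword_code (c : Fin 24 → ZMod 2) (hc : c ∈ GolayCode) : GoodWord c := by
  induction hc using Submodule.span_induction with
  | mem x hx => obtain ⟨j, rfl⟩ := hx; exact goodword_gen j
  | zero => exact goodword_zero
  | add x y hx hy ihx ihy =>
    obtain ⟨b, hb1, hb2, hb3⟩ := ihx
    obtain ⟨b', hb1', hb2', hb3'⟩ := ihy
    refine ⟨b + b', ?_, ?_, ?_⟩
    · have e : (fun i => 2 * (b + b') i) = (fun i => 2 * b i) + fun i => 2 * b' i := by
        funext i; simp [Pi.add_apply]; ring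
      rw [e]; exact add_mem hb1 hb1'
    · intro i
      have : ((b i + b' i : ℤ) : ZMod 2) = x i + y i := by
        push_cast; rw [hb2 i, hb2' i]
      simpa using this
    · simp only [Pi.add_apply]
      rw [Finset.sum_add_distrib]; exact dvd_add hb3 hb3'
  | smul r x hx ih =>
    rcases (by decide : ∀ r : ZMod 2, r = 0 ∨ r = 1) r with rfl | rfl
    · simpa [zero_smul] using goodword_zero
    · simpa [one_smul] using ih

lemma main0 (y : Fin 24 → ℤ) (he : ∀ i, (2:ℤ) ∣ y i)
    (hw : (fun i => ((y i / 2 : ℤ) : ZMod 2)) ∈ GolayCode)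
    (hs : (8:ℤ) ∣ ∑ i, y i) : y ∈ LC := by
  obtain ⟨b, hb1, hb2, hb3⟩ := goodword_code _ hw
  set z : Fin 24 → ℤ := fun i => (y i - 2 * b i) / 4 with hz
  have h4 : ∀ i, y i - 2 * b i = 4 * z i := by
    intro i
    have h2 : (2:ℤ) ∣ (b i - y i / 2) := by
      have hcast : ((b i - y i / 2 : ℤ) : ZMod 2) = 0 := by
        push_cast
        rw [hb2 i]; ring
      exact (ZMod.intCast_zmod_eq_zero_iff_dvd _ 2).mp hcast
    have h1 := he i
    simp only [hz]
    omega
  obtain ⟨t, ht⟩ : (2:ℤ) ∣ ∑ i, z i := by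
    have hsum4 : ∑ i, (y i - 2 * b i) = 4 * ∑ i, z i := by
      rw [Finset.mul_sum]; exact Finset.sum_congr rfl fun i _ => h4 i
    rw [Finset.sum_sub_distrib, ← Finset.mul_sum] at hsum4
    obtain ⟨u, hu⟩ := hs; obtain ⟨v, hv⟩ := hb3
    omega
  have hT : (fun k => 4 * z k) ∈ LC := by
    have hsum_mem : (∑ i : Fin 24, z i •
        (fun k => (if k = i then (4:ℤ) else 0) - (if k = (1:Fin 24) then 4 else 0))) ∈ LC :=
      sum_mem fun i _ => AddSubgroup.zsmul_mem LC (d_mem i) (z i)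
    have h8 := AddSubgroup.zsmul_mem LC e8_mem t
    have hadd := add_mem hsum_mem h8
    have e : ((∑ i : Fin 24, z i •
          (fun k => (if k = i then (4:ℤ) else 0) - (if k = (1:Fin 24) then 4 else 0)))
        + t • fun k => if k = (1:Fin 24) then (8:ℤ) else 0) = fun k => 4 * z k := by
      funext k
      simp only [Pi.add_apply, Finset.sum_apply, Pi.smul_apply, smul_eq_mul]
      have hterm : ∀ i : Fin 24,
          z i * ((if k = i then (4:ℤ) else 0) - (if k = (1:Fin 24) then 4 else 0))
          = (if k = i then z i * 4 else 0) - z i * (if k = (1:Fin 24) then 4 else 0) := by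
        intro i; split_ifs <;> ring
      rw [Finset.sum_congr rfl fun i _ => hterm i, Finset.sum_sub_distrib, ← Finset.sum_mul,
        Finset.sum_ite_eq]
      simp only [Finset.mem_univ, if_true]
      by_cases hk : k = (1:Fin 24)
      · subst hk
        rw [if_pos (rfl : (1:Fin 24) = 1), if_pos (rfl : (1:Fin 24) = 1), ht]; ring
      · simp only [if_neg hk, mul_zero, sub_zero]; ring
    rwa [e] at hadd
  have hy2 : (fun i => 2 * b i) + (fun k => 4 * z k) = y := by
    funext k
    have := h4 k
    simp only [Pi.add_apply]
    omega
  rw [← hy2]; exact add_mem hb1 hT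

lemma Wv_memSS : Wv ∈ SS := by
  constructor
  · refine ⟨1, Or.inr rfl, ?_, ?_, ?_⟩
    · intro i; unfold Wv; split_ifs <;> norm_num
    · have e : (fun i => (((Wv i - 1) / 2 : ℤ) : ZMod 2)) = (0 : Fin 24 → ZMod 2) := by decide
      rw [e]; exact zero_mem _
    · rw [show (∑ i, Wv i) = 28 from by decide]; norm_num
  · decide

/-- The vectors of squared length 6 in the Leech lattice (squared length 48 after √8
scaling) span the Leech lattice over ℤ: every Leech lattice vector is an integer
linear combination of norm-6 vectors. -/
theorem leech_norm6_spans (y : Fin 24 → ℤ) (hy : IsLeech y) :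
    y ∈ AddSubgroup.closure {x : Fin 24 → ℤ | IsLeech x ∧ ∑ i, (x i) ^ 2 = 48} := by
  obtain ⟨m, hm, he, hw, hs⟩ := hy
  rcases hm with rfl | rfl
  · exact main0 y (fun i => by simpa using he i) (by simpa using hw) (by simpa using hs)
  · have h1 : (fun i => y i - Wv i) ∈ LC := by
      apply main0
      · intro i
        have h := he i
        unfold Wv; split_ifs <;> omega
      · have e : (fun i => (((y i - Wv i) / 2 : ℤ) : ZMod 2))
            = fun i => (((y i - 1) / 2 : ℤ) : ZMod 2) := by
          funext i
          by_cases hi : i = 0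
          · subst hi
            have h := he 0
            have h5 : (y 0 - Wv 0) / 2 = (y 0 - 1) / 2 - 2 := by
              have hv : Wv 0 = 5 := rfl
              rw [hv]; omega
            rw [h5, Int.cast_sub, show ((2:ℤ) : ZMod 2) = 0 from by decide, sub_zero]
          · have hW : Wv i = 1 := if_neg hi
            rw [hW]
        rw [e]; exact hw
      · rw [Finset.sum_sub_distrib, show (∑ i, Wv i) = 28 from by decide]
        obtain ⟨u, hu⟩ := hs
        omega
    have hadd := add_mem h1 (AddSubgroup.subset_closure Wv_memSS)
    have e : (fun i => y i - Wv i) + Wv = y := by funext i; simp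
    rwa [e] at hadd
end

section
/- Let Λ be the Leech lattice and w ∈ Λ with |w|² = 6. The 552-point code ℬ = {b ∈ Λ : |b|² = 4, |w-b|² = 4}, after centering at w/2 and normalizing (each b ↦ (b - w/2)/|b - w/2| with |b - w/2| = √(5/2)), is a spherical code on S^22 in which the inner product of any point with the normalized projection of any c ∈ Λ satisfying |c|² = 4, |w - c|² = 6 lies in {-√3/5, 0, √3/5}. -/
/-- Let `Λ ⊂ ℝ²⁴` be the Leech lattice (abstracted here: an even additive subgroup with
no vectors of squared length 2), and `w ∈ Λ` with `|w|² = 6`. The 552-point code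
`ℬ = {b ∈ Λ : |b|²=4, |w-b|²=4}`, after centering at `w/2` and normalizing
(`b ↦ (b - w/2)/|b - w/2|` with `|b - w/2| = √(5/2)`), is a spherical code on `S²²` in
which the inner ℝ product of any point with the normalized projection
`(c - w/3)/|c - w/3|` (with `|c - w/3| = √(10/3)`) of any `c ∈ Λ` satisfying `|c|² = 4`,
`|w - c|² = 6` lies in `{-√3/5, 0, √3/5}`. -/
theorem leech_B552_normalized_cosines (Λ : AddSubgroup (EuclideanSpace ℝ (Fin 24)))
    (heven : ∀ v ∈ Λ, ∃ z : ℤ, (inner ℝ v v : ℝ) = 2 * z)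
    (hno2 : ∀ v ∈ Λ, (inner ℝ v v : ℝ) ≠ 2)
    (w : EuclideanSpace ℝ (Fin 24)) (hw : w ∈ Λ) (hw6 : (inner ℝ w w : ℝ) = 6)
    (b : EuclideanSpace ℝ (Fin 24)) (hb : b ∈ Λ)
    (hb4 : (inner ℝ b b : ℝ) = 4) (hwb : (inner ℝ (w - b) (w - b) : ℝ) = 4)
    (c : EuclideanSpace ℝ (Fin 24)) (hc : c ∈ Λ)
    (hc4 : (inner ℝ c c : ℝ) = 4) (hwc : (inner ℝ (w - c) (w - c) : ℝ) = 6) :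
    ‖b - (1/2 : ℝ) • w‖ = Real.sqrt (5/2) ∧
    ‖c - (1/3 : ℝ) • w‖ = Real.sqrt (10/3) ∧
    (inner ℝ ((Real.sqrt (5/2))⁻¹ • (b - (1/2 : ℝ) • w))
        ((Real.sqrt (10/3))⁻¹ • (c - (1/3 : ℝ) • w)) : ℝ) ∈
      ({-(Real.sqrt 3 / 5), 0, Real.sqrt 3 / 5} : Set ℝ) := by
  have hexp : ∀ x y : EuclideanSpace ℝ (Fin 24),
      (inner ℝ (x - y) (x - y) : ℝ) = inner ℝ x x - 2 * inner ℝ x y + inner ℝ y y := by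
    intro x y
    rw [inner_sub_left, inner_sub_right, inner_sub_right, real_inner_comm y x]
    ring
  have hwb3 : (inner ℝ w b : ℝ) = 3 := by
    have h := hwb; rw [hexp] at h; linarith
  have hwc2 : (inner ℝ w c : ℝ) = 2 := by
    have h := hwc; rw [hexp] at h; linarith
  -- b ≠ c
  have hbw : (inner ℝ b w : ℝ) = 3 := by rw [real_inner_comm]; exact hwb3
  have hcw : (inner ℝ c w : ℝ) = 2 := by rw [real_inner_comm]; exact hwc2
  have hbc_ne : b ≠ c := by
    intro h; rw [h] at hwb; rw [hwb] at hwc; norm_num at hwc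
  have hbc_pos : (0:ℝ) < inner ℝ (b - c) (b - c) :=
    lt_of_le_of_ne real_inner_self_nonneg
      (fun h => (sub_ne_zero.mpr hbc_ne) (inner_self_eq_zero.mp h.symm))
  have hbc_ne2 : (inner ℝ (b - c) (b - c) : ℝ) ≠ 2 :=
    hno2 _ (sub_mem hb hc)
  have hv_ne : b + c - w ≠ 0 := by
    intro h
    have hbwc : b = w - c := by
      have h2 := sub_eq_zero.mp h
      rw [← h2]; abel
    rw [hbwc, hwc] at hb4; norm_num at hb4
  have hv_mem : b + c - w ∈ Λ := sub_mem (add_mem hb hc) hw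
  have hv_pos : (0:ℝ) < inner ℝ (b + c - w) (b + c - w) :=
    lt_of_le_of_ne real_inner_self_nonneg
      (fun h => hv_ne (inner_self_eq_zero.mp h.symm))
  have hv_ne2 : (inner ℝ (b + c - w) (b + c - w) : ℝ) ≠ 2 := hno2 _ hv_mem
  set k : ℝ := inner ℝ b c with hk
  have hcb : (inner ℝ c b : ℝ) = k := by rw [real_inner_comm]
  have hbc_val : (inner ℝ (b - c) (b - c) : ℝ) = 8 - 2 * k := by
    rw [hexp]; rw [hb4, hc4]; ring
  have hv_val : (inner ℝ (b + c - w) (b + c - w) : ℝ) = 4 + 2 * k := by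
    rw [hexp]
    simp only [inner_add_left, inner_add_right]
    rw [hb4, hc4, hw6, hbw, hcw, hcb, ← hk]
    ring
  -- integrality of k
  obtain ⟨z, hz⟩ := heven _ (sub_mem hb hc)
  have hkz : k = 4 - z := by rw [hbc_val] at hz; linarith
  have hk_lt : k < 4 := by nlinarith [hbc_pos, hbc_val]
  have hk_gt : -2 < k := by nlinarith [hv_pos, hv_val]
  have hk_ne3 : k ≠ 3 := by
    intro h; apply hbc_ne2; rw [hbc_val, h]; norm_num
  have hk_nem1 : k ≠ -1 := by
    intro h; apply hv_ne2; rw [hv_val, h]; norm_num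
  have hkvals : k = 0 ∨ k = 1 ∨ k = 2 := by
    have h1 : (0:ℝ) < z := by linarith
    have h2 : (z:ℝ) < 6 := by linarith
    have h3 : (z:ℝ) ≠ 1 := by intro h; apply hk_ne3; rw [hkz, h]; norm_num
    have h4 : (z:ℝ) ≠ 5 := by intro h; apply hk_nem1; rw [hkz, h]; norm_num
    have hz1 : (0:ℤ) < z := by exact_mod_cast h1
    have hz2 : z < 6 := by exact_mod_cast h2
    have hz3 : z ≠ 1 := by exact_mod_cast h3
    have hz4 : z ≠ 5 := by exact_mod_cast h4
    have hzv : z = 2 ∨ z = 3 ∨ z = 4 := by omega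
    rcases hzv with h | h | h
    · right; right; rw [hkz, h]; norm_num
    · right; left; rw [hkz, h]; norm_num
    · left; rw [hkz, h]; norm_num
  -- norms
  have hxb : (inner ℝ (b - (1/2:ℝ) • w) (b - (1/2:ℝ) • w) : ℝ) = 5/2 := by
    rw [hexp]
    simp only [real_inner_smul_left, real_inner_smul_right]
    rw [hb4, hw6, hbw]
    ring
  have hxc : (inner ℝ (c - (1/3:ℝ) • w) (c - (1/3:ℝ) • w) : ℝ) = 10/3 := by
    rw [hexp]
    simp only [real_inner_smul_left, real_inner_smul_right]
    rw [hc4, hw6, hcw]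
    ring
  have hnb : ‖b - (1/2:ℝ) • w‖ = Real.sqrt (5/2) := by
    rw [← Real.sqrt_sq (norm_nonneg (b - (1/2:ℝ) • w)), ← real_inner_self_eq_norm_sq, hxb]
  have hnc : ‖c - (1/3:ℝ) • w‖ = Real.sqrt (10/3) := by
    rw [← Real.sqrt_sq (norm_nonneg (c - (1/3:ℝ) • w)), ← real_inner_self_eq_norm_sq, hxc]
  refine ⟨hnb, hnc, ?_⟩
  have hcross : (inner ℝ (b - (1/2:ℝ) • w) (c - (1/3:ℝ) • w) : ℝ) = k - 1 := by
    simp only [inner_sub_left, inner_sub_right, real_inner_smul_left, real_inner_smul_right]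
    rw [hw6, hbw, hwc2, ← hk]
    ring
  have hst : (Real.sqrt (5/2))⁻¹ * (Real.sqrt (10/3))⁻¹ = Real.sqrt 3 / 5 := by
    rw [← mul_inv, ← Real.sqrt_mul (by norm_num : (0:ℝ) ≤ 5/2),
      show (5:ℝ)/2 * (10/3) = 25/3 by norm_num, ← Real.sqrt_inv,
      show ((25:ℝ)/3)⁻¹ = 3/25 by norm_num,
      Real.sqrt_div (by norm_num : (0:ℝ) ≤ 3),
      show (25:ℝ) = 5^2 by norm_num, Real.sqrt_sq (by norm_num : (0:ℝ) ≤ 5)]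
  rw [real_inner_smul_left, real_inner_smul_right, hcross, ← mul_assoc, hst]
  rcases hkvals with h | h | h <;> rw [h] <;> norm_num
end

section
/- Let Λ be the Leech lattice, w ∈ Λ with |w|²=6, and e ∈ Λ with |e|²=6, |w-e|²=4. Define the Higman–Sims configuration F₁ = {x ∈ Λ : |x|²=4, |w-x|²=4, |e-x|²=4} and F₂ = {y ∈ Λ : |y|²=4, |w-y|²=4, |e-y|²=6}. Then for every x ∈ F₁ and y ∈ F₂, the inner product x·y lies in {1, 2}; equivalently, the normalized cosine ((x - m₁₀₀)·(y - w/2))/(√(11/5)·√(10/2)/√2) takes only the two values ±1/√22, where m₁₀₀ = w/2 + (3/10)(e - w/3) is the center of mass of F₁. -/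
set_option maxHeartbeats 1000000 in
/-- Higman–Sims configuration in the Leech lattice `Λ` (abstracted here: an even additive
subgroup of `ℝ²⁴` with no vectors of squared length 2). Let `w, e ∈ Λ` with `|w|² = 6`,
`|e|² = 6`, `|w - e|² = 4`, and let
`F₁ = {x ∈ Λ : |x|²=4, |w-x|²=4, |e-x|²=4}` and `F₂ = {y ∈ Λ : |y|²=4, |w-y|²=4, |e-y|²=6}`.
Then for every `x ∈ F₁` and `y ∈ F₂` the inner ℝ product `x·y` lies in `{1,2}`; equivalently
the normalized cosine `((x - m₁₀₀)·(y - w/2))/(√(11/5)·√(10/2)/√2)` takes only the values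
`±1/√22`, where `m₁₀₀ = w/2 + (3/10)(e - w/3)` is the center of mass of `F₁`. -/
theorem higman_sims_inner_products (Λ : AddSubgroup (EuclideanSpace ℝ (Fin 24)))
    (heven : ∀ v ∈ Λ, ∃ z : ℤ, (inner ℝ v v : ℝ) = 2 * z)
    (hno2 : ∀ v ∈ Λ, (inner ℝ v v : ℝ) ≠ 2)
    (w : EuclideanSpace ℝ (Fin 24)) (hw : w ∈ Λ) (hw6 : (inner ℝ w w : ℝ) = 6)
    (e : EuclideanSpace ℝ (Fin 24)) (he : e ∈ Λ) (he6 : (inner ℝ e e : ℝ) = 6)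
    (hwe : (inner ℝ (w - e) (w - e) : ℝ) = 4)
    (x : EuclideanSpace ℝ (Fin 24)) (hx : x ∈ Λ) (hx4 : (inner ℝ x x : ℝ) = 4)
    (hwx : (inner ℝ (w - x) (w - x) : ℝ) = 4) (hex : (inner ℝ (e - x) (e - x) : ℝ) = 4)
    (y : EuclideanSpace ℝ (Fin 24)) (hy : y ∈ Λ) (hy4 : (inner ℝ y y : ℝ) = 4)
    (hwy : (inner ℝ (w - y) (w - y) : ℝ) = 4) (hey : (inner ℝ (e - y) (e - y) : ℝ) = 6) :
    (inner ℝ x y : ℝ) ∈ ({1, 2} : Set ℝ) ∧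
    (inner ℝ (x - ((1/2 : ℝ) • w + (3/10 : ℝ) • (e - (1/3 : ℝ) • w)))
        (y - (1/2 : ℝ) • w) : ℝ) /
      (Real.sqrt (11/5) * Real.sqrt (10/2) / Real.sqrt 2) ∈
      ({-(1 / Real.sqrt 22), 1 / Real.sqrt 22} : Set ℝ) := by
  -- expand the polarization identities
  have exp : ∀ a b : EuclideanSpace ℝ (Fin 24),
      (inner ℝ (a - b) (a - b) : ℝ)
        = inner ℝ a a - 2 * inner ℝ a b + inner ℝ b b := by
    intro a b
    simp only [inner_sub_left, inner_sub_right, real_inner_comm a b]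
    ring
  have hwe' : (inner ℝ w e : ℝ) = 4 := by
    have := exp w e; rw [hwe, hw6, he6] at this; linarith
  have hwx' : (inner ℝ w x : ℝ) = 3 := by
    have := exp w x; rw [hwx, hw6, hx4] at this; linarith
  have hex' : (inner ℝ e x : ℝ) = 3 := by
    have := exp e x; rw [hex, he6, hx4] at this; linarith
  have hwy' : (inner ℝ w y : ℝ) = 3 := by
    have := exp w y; rw [hwy, hw6, hy4] at this; linarith
  have hey' : (inner ℝ e y : ℝ) = 2 := by
    have := exp e y; rw [hey, he6, hy4] at this; linarith
  -- integrality of x·y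
  obtain ⟨z, hz⟩ := heven (x + y) (Λ.add_mem hx hy)
  have hz' : (inner ℝ x y : ℝ) = z - 4 := by
    have : (inner ℝ (x+y) (x+y) : ℝ) = inner ℝ x x + 2 * inner ℝ x y + inner ℝ y y := by
      simp only [inner_add_left, inner_add_right, real_inner_comm x y]; ring
    rw [hz, hx4, hy4] at this; linarith
  -- upper bound : |x - y|² ≥ 4
  have key : ∀ v ∈ Λ, v ≠ 0 → (4:ℝ) ≤ inner ℝ v v := by
    intro v hv hv0
    obtain ⟨m, hm⟩ := heven v hv
    have hne0 : (inner ℝ v v : ℝ) ≠ 0 := fun h => hv0 (by rwa [inner_self_eq_zero] at h)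
    have h0 : (0:ℝ) < inner ℝ v v := lt_of_le_of_ne real_inner_self_nonneg (Ne.symm hne0)
    have hm0 : (0:ℤ) < m := by
      by_contra h; push_neg at h
      have : (m:ℝ) ≤ 0 := by exact_mod_cast h
      nlinarith
    have hm1 : m ≠ 1 := by
      intro h; apply hno2 v hv; rw [hm, h]; norm_num
    have : (2:ℤ) ≤ m := by omega
    have : (2:ℝ) ≤ (m:ℝ) := by exact_mod_cast this
    nlinarith
  have hxy_ne : x ≠ y := by
    intro h; rw [h] at hex'; rw [hex'] at hey'; norm_num at hey'
  have hub : (inner ℝ x y : ℝ) ≤ 2 := by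
    have h4 := key (x - y) (Λ.sub_mem hx hy) (sub_ne_zero.2 hxy_ne)
    have := exp x y
    rw [hx4, hy4] at this
    linarith
  have hne2 : x ≠ w - y := by
    intro h
    rw [h] at hex'
    rw [inner_sub_right, real_inner_comm w e, hwe', hey'] at hex'
    norm_num at hex'
  have hlb : (1:ℝ) ≤ inner ℝ x y := by
    have hmem : x - (w - y) ∈ Λ := Λ.sub_mem hx (Λ.sub_mem hw hy)
    have h4 := key _ hmem (sub_ne_zero.2 hne2)
    have hexp := exp x (w - y)
    have hsub : (inner ℝ x (w - y) : ℝ) = inner ℝ x w - inner ℝ x y := inner_sub_right x w y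
    rw [hwy, hx4, hsub, real_inner_comm w x, hwx'] at hexp
    linarith
  have hmem12 : (inner ℝ x y : ℝ) = 1 ∨ (inner ℝ x y : ℝ) = 2 := by
    have h1 : (5:ℝ) ≤ z := by rw [hz'] at hlb; linarith
    have h2 : (z:ℝ) ≤ 6 := by rw [hz'] at hub; linarith
    have h1' : (5:ℤ) ≤ z := by exact_mod_cast h1
    have h2' : z ≤ 6 := by exact_mod_cast h2
    interval_cases z <;> simp [hz'] <;> norm_num
  refine ⟨by rcases hmem12 with h | h <;> simp [h], ?_⟩
  -- numerator
  have hnum : (inner ℝ (x - ((1/2 : ℝ) • w + (3/10 : ℝ) • (e - (1/3 : ℝ) • w)))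
      (y - (1/2 : ℝ) • w) : ℝ) = inner ℝ x y - 3/2 := by
    simp only [inner_sub_left, inner_sub_right, inner_add_left,
      real_inner_smul_left, real_inner_smul_right]
    rw [real_inner_comm w x, real_inner_comm w e, hwx', hwy', hwe', hey', hw6]
    ring
  have h1 : Real.sqrt (11/5) * Real.sqrt (10/2) = Real.sqrt 11 := by
    rw [← Real.sqrt_mul (by norm_num : (0:ℝ) ≤ 11/5)]
    norm_num
  have h22 : Real.sqrt 22 = Real.sqrt 11 * Real.sqrt 2 := by
    rw [← Real.sqrt_mul (by norm_num : (0:ℝ) ≤ 11)]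
    norm_num
  have s2 : Real.sqrt 2 * Real.sqrt 2 = 2 := Real.mul_self_sqrt (by norm_num)
  have p2 : (0:ℝ) < Real.sqrt 2 := Real.sqrt_pos.2 (by norm_num)
  have p11 : (0:ℝ) < Real.sqrt 11 := Real.sqrt_pos.2 (by norm_num)
  rw [hnum, h1, h22]
  rcases hmem12 with h | h <;> rw [h] <;> [left; (right; rw [Set.mem_singleton_iff])] <;>
    field_simp <;> nlinarith [s2, p2, p11]
end
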